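/- arXiv:1906.00394 — 13 statements merged into one kernel-verified Lean document; each statement's English description precedes it below -/
import Mathlib

section
/- Suppose there exists a constant c > 0 such that for every t > 0 there is x ∈ X with ‖x‖_X = 1 and K(x,t) > c. Then for every pair of non-increasing sequences (ε_n) and (t_n) of positive real numbers converging to 0, there exists x ∈ X such that the sequence (K(x,t_n)) is not O(ε_n); that is, for every constant C > 0 there exists n ∈ ℕ with K(x,t_n) > C·ε_n. -/
open Filter Topology

section Aux

variable {X : Type*} [NormedAddCommGroup X] [NormedSpace ℝ X]
  {Y : Type*} [AddCommGroup Y] [Module ℝ Y]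
  (NY : Seminorm ℝ Y) (j : Y →ₗ[ℝ] X)

private noncomputable def Kfun (x : X) (t : ℝ) : ℝ :=
  ⨅ y : Y, (‖x - j y‖ + t * NY y)

variable {t : ℝ}

private lemma Kfun_bdd (x : X) (ht : 0 ≤ t) :
    BddBelow (Set.range fun y : Y => ‖x - j y‖ + t * NY y) := by
  refine ⟨0, ?_⟩
  rintro r ⟨y, rfl⟩
  exact add_nonneg (norm_nonneg _) (mul_nonneg ht (apply_nonneg _ _))

private lemma Kfun_le (x : X) (ht : 0 ≤ t) (y : Y) :
    Kfun NY j x t ≤ ‖x - j y‖ + t * NY y :=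
  ciInf_le (Kfun_bdd NY j x ht) y

private lemma Kfun_le_norm (x : X) (ht : 0 ≤ t) : Kfun NY j x t ≤ ‖x‖ := by
  have := Kfun_le NY j x ht 0
  simpa using this

private lemma Kfun_lip (x x' : X) (ht : 0 ≤ t) :
    Kfun NY j x t ≤ Kfun NY j x' t + ‖x - x'‖ := by
  rw [← sub_le_iff_le_add]
  unfold Kfun
  refine le_ciInf fun y => ?_
  have h1 := Kfun_le NY j x ht y
  unfold Kfun at h1
  have h2 : ‖x - j y‖ ≤ ‖x' - j y‖ + ‖x - x'‖ := by
    have : x - j y = (x' - j y) + (x - x') := by abel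
    rw [this]; exact norm_add_le _ _
  linarith

private lemma Kfun_add (u v : X) (ht : 0 ≤ t) :
    Kfun NY j (u + v) t ≤ Kfun NY j u t + Kfun NY j v t := by
  have h1 : ∀ y y' : Y, Kfun NY j (u + v) t ≤
      (‖u - j y‖ + t * NY y) + (‖v - j y'‖ + t * NY y') := by
    intro y y'
    refine (Kfun_le NY j (u + v) ht (y + y')).trans ?_
    have hn : ‖u + v - j (y + y')‖ ≤ ‖u - j y‖ + ‖v - j y'‖ := by
      rw [map_add]
      have : u + v - (j y + j y') = (u - j y) + (v - j y') := by abel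
      rw [this]; exact norm_add_le _ _
    have hs : NY (y + y') ≤ NY y + NY y' := map_add_le_add NY y y'
    nlinarith [apply_nonneg NY (y + y')]
  unfold Kfun at h1
  rw [← sub_le_iff_le_add]
  unfold Kfun
  refine le_ciInf fun y => ?_
  rw [sub_le_iff_le_add, ← sub_le_iff_le_add']
  refine le_ciInf fun y' => ?_
  linarith [h1 y y']

private lemma Kfun_neg (v : X) (ht : 0 ≤ t) :
    Kfun NY j (-v) t ≤ Kfun NY j v t := by
  conv_rhs => unfold Kfun
  refine le_ciInf fun y => ?_
  refine (Kfun_le NY j (-v) ht (-y)).trans_eq ?_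
  have : -v - j (-y) = -(v - j y) := by rw [map_neg]; abel
  rw [this, norm_neg, map_neg_eq_map]

private lemma Kfun_smul_le (a : ℝ) (ha : 0 < a) (x : X) (ht : 0 ≤ t) :
    Kfun NY j (a • x) t ≤ a * Kfun NY j x t := by
  have h1 : ∀ y : Y, Kfun NY j (a • x) t ≤ a * (‖x - j y‖ + t * NY y) := by
    intro y
    refine (Kfun_le NY j (a • x) ht (a • y)).trans_eq ?_
    rw [map_smul, ← smul_sub, norm_smul, map_smul_eq_mul, Real.norm_eq_abs,
      abs_of_pos ha]
    ring
  rw [← div_le_iff₀' ha]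
  conv_rhs => unfold Kfun
  exact le_ciInf fun y => by rw [div_le_iff₀' ha]; exact h1 y

end Aux

/-- If Peetre's K-functional of the couple (X,Y) satisfies K(S(X),t) > c for all t > 0,
then for all non-increasing null sequences (ε_n), (t_n) of positive reals there is x ∈ X
with K(x,t_n) ≠ O(ε_n). -/
theorem slow_decay_implies_not_bigO
    {X : Type*} [NormedAddCommGroup X] [NormedSpace ℝ X] [CompleteSpace X]
    {Y : Type*} [AddCommGroup Y] [Module ℝ Y]
    (NY : Seminorm ℝ Y)
    (j : Y →ₗ[ℝ] X) (M : ℝ) (hM : 0 < M)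
    (hj : ∀ y : Y, ‖j y‖ ≤ M * NY y)
    (K : X → ℝ → ℝ)
    (hK : ∀ (x : X) (t : ℝ), K x t = ⨅ y : Y, (‖x - j y‖ + t * NY y))
    (c : ℝ) (hc : 0 < c)
    (hslow : ∀ t : ℝ, 0 < t → ∃ x : X, ‖x‖ = 1 ∧ c < K x t) :
    ∀ ε τ : ℕ → ℝ, Antitone ε → Antitone τ →
      (∀ n, 0 < ε n) → (∀ n, 0 < τ n) →
      Tendsto ε atTop (𝓝 0) → Tendsto τ atTop (𝓝 0) →
      ∃ x : X, ∀ C : ℝ, 0 < C → ∃ n : ℕ, C * ε n < K x (τ n) := by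
  intro ε τ hεa hτa hεpos hτpos hεlim hτlim
  have hKK : ∀ x t, K x t = Kfun NY j x t := fun x t => hK x t
  by_contra hcon
  push_neg at hcon
  -- continuity of x ↦ Kfun x t for t ≥ 0
  have hcont : ∀ t : ℝ, 0 ≤ t → Continuous fun x : X => Kfun NY j x t := by
    intro t ht
    refine (LipschitzWith.of_dist_le_mul (K := 1) fun x x' => ?_).continuous
    rw [Real.dist_eq, dist_eq_norm, NNReal.coe_one, one_mul, abs_sub_le_iff]
    constructor
    · linarith [Kfun_lip NY j x x' ht]
    · have := Kfun_lip NY j x' x ht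
      rw [norm_sub_rev] at this
      linarith
  -- the closed sets
  set F : ℕ → Set X := fun m => {x | ∀ n, Kfun NY j x (τ n) ≤ ((m : ℝ) + 1) * ε n}
    with hF
  have hFclosed : ∀ m, IsClosed (F m) := by
    intro m
    have : F m = ⋂ n, {x | Kfun NY j x (τ n) ≤ ((m : ℝ) + 1) * ε n} := by
      ext x; simp [hF]
    rw [this]
    exact isClosed_iInter fun n =>
      isClosed_le (hcont (τ n) (hτpos n).le) continuous_const
  have hFunion : (⋃ m, F m) = Set.univ := by
    ext x
    simp only [Set.mem_iUnion, Set.mem_univ, iff_true]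
    obtain ⟨C, hC, hCb⟩ := hcon x
    refine ⟨⌈C⌉₊, fun n => ?_⟩
    have h1 := hCb n
    rw [hKK] at h1
    have h2 : C ≤ (⌈C⌉₊ : ℝ) + 1 := (Nat.le_ceil C).trans (by linarith)
    calc Kfun NY j x (τ n) ≤ C * ε n := h1
      _ ≤ ((⌈C⌉₊ : ℝ) + 1) * ε n := by
          exact mul_le_mul_of_nonneg_right h2 (hεpos n).le
  -- Baire category
  obtain ⟨m, x0, hx0⟩ := nonempty_interior_of_iUnion_of_closed hFclosed hFunion
  obtain ⟨r, hr, hball⟩ := Metric.isOpen_iff.1 isOpen_interior x0 hx0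
  have hball' : Metric.ball x0 r ⊆ F m := hball.trans interior_subset
  set D : ℝ := (2 / r) * (2 * ((m : ℝ) + 1)) with hD
  have hDpos : 0 < D := by positivity
  obtain ⟨n, hn⟩ := (hεlim.eventually_lt_const (show (0:ℝ) < c / D by positivity)).exists
  obtain ⟨x, hx1, hxK⟩ := hslow (τ n) (hτpos n)
  have ht0 : (0:ℝ) ≤ τ n := (hτpos n).le
  set u : X := x0 + (r / 2) • x with hu
  have humem : u ∈ Metric.ball x0 r := by
    rw [Metric.mem_ball, dist_eq_norm]
    have : u - x0 = (r / 2) • x := by rw [hu]; abel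
    rw [this, norm_smul, Real.norm_eq_abs, abs_of_pos (by linarith), hx1]
    linarith
  have hu1 : Kfun NY j u (τ n) ≤ ((m : ℝ) + 1) * ε n := hball' humem n
  have hu2 : Kfun NY j x0 (τ n) ≤ ((m : ℝ) + 1) * ε n :=
    hball' (Metric.mem_ball_self hr) n
  have hkey : Kfun NY j ((r / 2) • x) (τ n) ≤ 2 * ((m : ℝ) + 1) * ε n := by
    have heq : (r / 2) • x = u + (-x0) := by rw [hu]; abel
    rw [heq]
    calc Kfun NY j (u + (-x0)) (τ n)
        ≤ Kfun NY j u (τ n) + Kfun NY j (-x0) (τ n) := Kfun_add NY j u (-x0) ht0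
      _ ≤ Kfun NY j u (τ n) + Kfun NY j x0 (τ n) := by
          linarith [Kfun_neg NY j x0 ht0]
      _ ≤ 2 * ((m : ℝ) + 1) * ε n := by linarith
  have hxle : Kfun NY j x (τ n) ≤ D * ε n := by
    have h1 : Kfun NY j ((2 / r) • ((r / 2) • x)) (τ n) ≤
        (2 / r) * Kfun NY j ((r / 2) • x) (τ n) :=
      Kfun_smul_le NY j (2 / r) (by positivity) _ ht0
    have h2 : (2 / r) • ((r / 2) • x) = x := by
      rw [smul_smul, div_mul_div_comm]
      norm_num
      rw [mul_comm, div_self (by positivity), one_smul]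
    rw [h2] at h1
    calc Kfun NY j x (τ n) ≤ (2 / r) * Kfun NY j ((r / 2) • x) (τ n) := h1
      _ ≤ (2 / r) * (2 * ((m : ℝ) + 1) * ε n) :=
          mul_le_mul_of_nonneg_left hkey (by positivity)
      _ = D * ε n := by rw [hD]; ring
  rw [hKK] at hxK
  have : D * ε n < c := by
    calc D * ε n < D * (c / D) := by
          exact mul_lt_mul_of_pos_left hn hDpos
      _ = c := by field_simp
  linarith
end

section
/- Suppose that for every pair of non-increasing sequences (ε_n) and (t_n) of positive real numbers converging to 0 there exists x ∈ X such that the sequence (K(x,t_n)) is not O(ε_n), i.e. for every C > 0 there is n ∈ ℕ with K(x,t_n) > C·ε_n. Then there exists a constant c > 0 such that for every t > 0 there is x ∈ X with ‖x‖_X = 1 and K(x,t) > c. -/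
open Filter Topology

/-- If for all non-increasing null sequences (ε_n), (t_n) of positive reals there is x ∈ X
with K(x,t_n) ≠ O(ε_n), then K(S(X),t) > c for all t > 0 and a certain constant c > 0. -/
theorem not_bigO_implies_slow_decay
    {X : Type*} [NormedAddCommGroup X] [NormedSpace ℝ X] [CompleteSpace X]
    {Y : Type*} [AddCommGroup Y] [Module ℝ Y]
    (NY : Seminorm ℝ Y)
    (j : Y →ₗ[ℝ] X) (M : ℝ) (hM : 0 < M)
    (hj : ∀ y : Y, ‖j y‖ ≤ M * NY y)
    (K : X → ℝ → ℝ)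
    (hK : ∀ (x : X) (t : ℝ), K x t = ⨅ y : Y, (‖x - j y‖ + t * NY y))
    (h : ∀ ε τ : ℕ → ℝ, Antitone ε → Antitone τ →
      (∀ n, 0 < ε n) → (∀ n, 0 < τ n) →
      Tendsto ε atTop (𝓝 0) → Tendsto τ atTop (𝓝 0) →
      ∃ x : X, ∀ C : ℝ, 0 < C → ∃ n : ℕ, C * ε n < K x (τ n)) :
    ∃ c : ℝ, 0 < c ∧ ∀ t : ℝ, 0 < t → ∃ x : X, ‖x‖ = 1 ∧ c < K x t := by
  -- basic facts about K
  have hbdd : ∀ (x : X) (t : ℝ), 0 ≤ t →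
      BddBelow (Set.range fun y : Y => ‖x - j y‖ + t * NY y) := by
    intro x t ht
    exact ⟨0, fun r ⟨y, hy⟩ => hy ▸ add_nonneg (norm_nonneg _)
      (mul_nonneg ht (apply_nonneg NY y))⟩
  have hKle : ∀ (x : X) (t : ℝ), 0 ≤ t → K x t ≤ ‖x‖ := by
    intro x t ht
    rw [hK]
    have := ciInf_le (hbdd x t ht) (0 : Y)
    simpa using this
  have hKnonneg : ∀ (x : X) (t : ℝ), 0 ≤ t → 0 ≤ K x t := by
    intro x t ht
    rw [hK]
    exact Real.iInf_nonneg fun y => add_nonneg (norm_nonneg _)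
      (mul_nonneg ht (apply_nonneg NY y))
  have hKmono : ∀ (x : X) (s t : ℝ), 0 ≤ s → s ≤ t → K x s ≤ K x t := by
    intro x s t hs hst
    rw [hK, hK]
    exact ciInf_mono (hbdd x s hs) fun y =>
      add_le_add_right (mul_le_mul_of_nonneg_right hst (apply_nonneg NY y)) _
  -- homogeneity: K (a • u) t ≤ a * K u t for a > 0
  have hKhom : ∀ (u : X) (a t : ℝ), 0 < a → 0 ≤ t → K (a • u) t ≤ a * K u t := by
    intro u a t ha ht
    rw [hK u t]
    rw [← div_le_iff₀' ha]
    apply le_ciInf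
    intro y
    rw [div_le_iff₀' ha]
    have h1 : K (a • u) t ≤ ‖a • u - j (a • y)‖ + t * NY (a • y) := by
      rw [hK]; exact ciInf_le (hbdd _ t ht) (a • y)
    calc K (a • u) t ≤ ‖a • u - j (a • y)‖ + t * NY (a • y) := h1
      _ = a * (‖u - j y‖ + t * NY y) := by
          rw [map_smul, ← smul_sub, norm_smul, map_smul_eq_mul]
          simp [Real.norm_of_nonneg ha.le, mul_add]
          ring
  by_contra hc
  push_neg at hc
  set ε : ℕ → ℝ := fun n => (2 : ℝ)⁻¹ ^ n with hε
  have hεpos : ∀ n, 0 < ε n := fun n => by positivity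
  choose t htpos htbd using fun n => hc (ε n) (hεpos n)
  set τ : ℕ → ℝ := fun n =>
    (Finset.range (n + 1)).inf' (by simp) (fun i => min (t i) (ε i)) with hτ
  have hτpos : ∀ n, 0 < τ n := by
    intro n
    rw [hτ]
    simp only [Finset.lt_inf'_iff]
    exact fun i _ => lt_min (htpos i) (hεpos i)
  have hτle : ∀ n, τ n ≤ min (t n) (ε n) := fun n =>
    Finset.inf'_le _ (Finset.self_mem_range_succ n)
  have hτanti : Antitone τ := by
    apply antitone_nat_of_succ_le
    intro n
    apply Finset.le_inf'
    intro i hi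
    exact Finset.inf'_le _ (Finset.mem_range.mpr
      (Nat.lt_succ_of_lt (Finset.mem_range.mp hi)))
  have hεanti : Antitone ε := fun m n hmn =>
    pow_le_pow_of_le_one (by norm_num) (by norm_num) hmn
  have hεlim : Tendsto ε atTop (𝓝 0) :=
    tendsto_pow_atTop_nhds_zero_of_lt_one (by norm_num) (by norm_num)
  have hτlim : Tendsto τ atTop (𝓝 0) := by
    apply squeeze_zero (fun n => (hτpos n).le)
      (fun n => (hτle n).trans (min_le_right _ _)) hεlim
  obtain ⟨x, hx⟩ := h ε τ hεanti hτanti hεpos hτpos hεlim hτlim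
  have hxne : x ≠ 0 := by
    intro h0
    obtain ⟨n, hn⟩ := hx 1 one_pos
    have : K x (τ n) ≤ 0 := by
      have := hKle x (τ n) (hτpos n).le
      simpa [h0] using this
    nlinarith [hεpos n]
  have hxpos : 0 < ‖x‖ := norm_pos_iff.mpr hxne
  obtain ⟨n, hn⟩ := hx ‖x‖ hxpos
  set u : X := ‖x‖⁻¹ • x with hu
  have hune : ‖u‖ = 1 := norm_smul_inv_norm hxne
  have hub : K u (t n) ≤ ε n := htbd n u hune
  have hxu : x = ‖x‖ • u := by
    rw [hu, smul_smul, mul_inv_cancel₀ hxpos.ne', one_smul]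
  have h1 : K x (τ n) ≤ K x (t n) :=
    hKmono x (τ n) (t n) (hτpos n).le ((hτle n).trans (min_le_left _ _))
  have h2 : K x (t n) ≤ ‖x‖ * K u (t n) := by
    conv_lhs => rw [hxu]
    exact hKhom u ‖x‖ (t n) hxpos (htpos n).le
  have h3 : ‖x‖ * K u (t n) ≤ ‖x‖ * ε n :=
    mul_le_mul_of_nonneg_left hub hxpos.le
  linarith
end

section
/- Suppose there exists a constant c > 0 such that for every t > 0 there is x ∈ X with ‖x‖_X = 1 and K(x,t) > c. Then for every θ ∈ (0,1) there exists x ∈ X such that the set { 2^{θk}·K(x, 2^{−k}) : k ∈ ℕ } is unbounded above; in particular this x does not belong to A_{θ,q} for any q ∈ (0,∞]. -/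
open Filter Topology

noncomputable def smulEquiv {Y : Type*} [AddCommGroup Y] [Module ℝ Y] (a : ℝ) (ha : a ≠ 0) :
    Y ≃ Y where
  toFun y := a • y
  invFun y := a⁻¹ • y
  left_inv y := by show a⁻¹ • a • y = y; rw [smul_smul, inv_mul_cancel₀ ha, one_smul]
  right_inv y := by show a • a⁻¹ • y = y; rw [smul_smul, mul_inv_cancel₀ ha, one_smul]

lemma iInf_equiv_real {Y : Type*} (e : Y ≃ Y) (f : Y → ℝ) : ⨅ y, f (e y) = ⨅ y, f y := by
  rw [iInf, iInf]
  congr 1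
  exact e.surjective.range_comp f

/-- `MemA K θ q x` means that `x` belongs to the real interpolation class `A_{θ,q}` computed
from the (discretized) K-functional `K`: for `q < ∞` this means
`Σ_k (2^{θk} K(x,2^{-k}))^q < ∞`, and for `q = ∞` it means `sup_k 2^{θk} K(x,2^{-k}) < ∞`. -/
def MemA {X : Type*} (K : X → ℝ → ℝ) (θ : ℝ) (q : ENNReal) (x : X) : Prop :=
  (q = ⊤ ∧ BddAbove
      (Set.range fun k : ℕ => (2 : ℝ) ^ (θ * (k : ℝ)) * K x ((2 : ℝ) ^ (-(k : ℝ))))) ∨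
  (q ≠ ⊤ ∧ Summable
      (fun k : ℕ => ((2 : ℝ) ^ (θ * (k : ℝ)) * K x ((2 : ℝ) ^ (-(k : ℝ)))) ^ q.toReal))

/-- If K(S(X),t) > c for all t > 0, then for every θ ∈ (0,1) there is x ∈ X such that
{2^{θk} K(x,2^{-k}) : k ∈ ℕ} is unbounded above; in particular x ∉ A_{θ,q} for all q ∈ (0,∞]. -/
theorem slow_decay_implies_interpolation_strict
    {X : Type*} [NormedAddCommGroup X] [NormedSpace ℝ X] [CompleteSpace X]
    {Y : Type*} [AddCommGroup Y] [Module ℝ Y]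
    (NY : Seminorm ℝ Y)
    (j : Y →ₗ[ℝ] X) (M : ℝ) (hM : 0 < M)
    (hj : ∀ y : Y, ‖j y‖ ≤ M * NY y)
    (K : X → ℝ → ℝ)
    (hK : ∀ (x : X) (t : ℝ), K x t = ⨅ y : Y, (‖x - j y‖ + t * NY y))
    (c : ℝ) (hc : 0 < c)
    (hslow : ∀ t : ℝ, 0 < t → ∃ x : X, ‖x‖ = 1 ∧ c < K x t)
    (θ : ℝ) (hθ : θ ∈ Set.Ioo (0 : ℝ) 1) :
    ∃ x : X,
      ¬ BddAbove
        (Set.range fun k : ℕ => (2 : ℝ) ^ (θ * (k : ℝ)) * K x ((2 : ℝ) ^ (-(k : ℝ)))) ∧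
      ∀ q : ENNReal, 0 < q → ¬ MemA K θ q x := by
  obtain ⟨hθ0, hθ1⟩ := hθ
  -- basic facts about K
  have hbdd : ∀ (x : X) (t : ℝ), 0 ≤ t →
      BddBelow (Set.range fun y : Y => ‖x - j y‖ + t * NY y) := by
    intro x t ht
    refine ⟨0, ?_⟩
    rintro _ ⟨y, rfl⟩
    have h1 := apply_nonneg NY y
    positivity
  have hKle : ∀ (x : X) (t : ℝ), 0 ≤ t → ∀ y : Y, K x t ≤ ‖x - j y‖ + t * NY y := by
    intro x t ht y
    rw [hK]
    exact ciInf_le (hbdd x t ht) y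
  have hK0 : ∀ (x : X) (t : ℝ), 0 ≤ t → 0 ≤ K x t := by
    intro x t ht
    rw [hK]
    refine le_ciInf fun y => ?_
    have h1 := apply_nonneg NY y
    positivity
  have hKnorm : ∀ (x : X) (t : ℝ), 0 ≤ t → K x t ≤ ‖x‖ := by
    intro x t ht
    have := hKle x t ht 0
    simpa using this
  have hKadd : ∀ (u v : X) (t : ℝ), 0 ≤ t → K (u + v) t ≤ K u t + K v t := by
    intro u v t ht
    refine le_of_forall_pos_le_add fun ε hε => ?_
    have h1 : (⨅ y : Y, ‖u - j y‖ + t * NY y) < K u t + ε / 2 := by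
      rw [← hK]; linarith
    obtain ⟨y1, hy1⟩ := exists_lt_of_ciInf_lt h1
    have h2 : (⨅ y : Y, ‖v - j y‖ + t * NY y) < K v t + ε / 2 := by
      rw [← hK]; linarith
    obtain ⟨y2, hy2⟩ := exists_lt_of_ciInf_lt h2
    have h3 : K (u + v) t ≤ ‖(u + v) - j (y1 + y2)‖ + t * NY (y1 + y2) := hKle _ _ ht _
    have hn : ‖(u + v) - j (y1 + y2)‖ ≤ ‖u - j y1‖ + ‖v - j y2‖ := by
      rw [map_add]
      have heq : (u + v) - (j y1 + j y2) = (u - j y1) + (v - j y2) := by abel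
      calc ‖(u + v) - (j y1 + j y2)‖ = ‖(u - j y1) + (v - j y2)‖ := by rw [heq]
        _ ≤ ‖u - j y1‖ + ‖v - j y2‖ := norm_add_le _ _
    have hs : NY (y1 + y2) ≤ NY y1 + NY y2 := map_add_le_add NY y1 y2
    have hs' := mul_le_mul_of_nonneg_left hs ht
    rw [mul_add] at hs'
    linarith
  have hKsmul : ∀ (a : ℝ), a ≠ 0 → ∀ (x : X) (t : ℝ), K (a • x) t = |a| * K x t := by
    intro a ha x t
    set e : Y ≃ Y := smulEquiv a ha with hedef
    rw [hK, hK, Real.mul_iInf_of_nonneg (abs_nonneg a)]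
    refine Eq.symm ?_
    calc ⨅ y : Y, |a| * (‖x - j y‖ + t * NY y)
        = ⨅ y : Y, ‖a • x - j (e y)‖ + t * NY (e y) := by
          refine iInf_congr fun y => ?_
          have he : e y = a • y := rfl
          rw [he, map_smul, ← smul_sub, norm_smul, Real.norm_eq_abs,
            map_smul_eq_mul, Real.norm_eq_abs]
          ring
      _ = ⨅ y : Y, ‖a • x - j y‖ + t * NY y :=
          iInf_equiv_real e (fun y => ‖a • x - j y‖ + t * NY y)
  have hKlip : ∀ t : ℝ, 0 ≤ t → LipschitzWith 1 (fun x : X => K x t) := by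
    intro t ht
    have lip1 : ∀ x x' : X, K x t ≤ K x' t + ‖x - x'‖ := by
      intro x x'
      have h1 : K x t = K (x' + (x - x')) t := by rw [add_sub_cancel]
      have h2 := hKadd x' (x - x') t ht
      have h3 := hKnorm (x - x') t ht
      linarith [h1 ▸ (le_refl (K x t)), h2, h3, h1]
    refine LipschitzWith.of_dist_le_mul fun x x' => ?_
    rw [Real.dist_eq, dist_eq_norm, NNReal.coe_one, one_mul, abs_sub_le_iff]
    constructor
    · linarith [lip1 x x']
    · have := lip1 x' x
      rw [norm_sub_rev] at this
      linarith
  -- main claim via Baire category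
  have main : ∃ x : X, ¬ BddAbove
      (Set.range fun k : ℕ => (2 : ℝ) ^ (θ * (k : ℝ)) * K x ((2 : ℝ) ^ (-(k : ℝ)))) := by
    by_contra h
    push_neg at h
    set f : ℕ → Set X := fun n =>
      ⋂ k : ℕ, {x : X | (2 : ℝ) ^ (θ * (k : ℝ)) * K x ((2 : ℝ) ^ (-(k : ℝ))) ≤ (n : ℝ)} with hf
    have hfc : ∀ n, IsClosed (f n) := by
      intro n
      refine isClosed_iInter fun k => ?_
      have ht : (0:ℝ) ≤ (2 : ℝ) ^ (-(k : ℝ)) := le_of_lt (Real.rpow_pos_of_pos two_pos _)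
      exact isClosed_le (continuous_const.mul (hKlip _ ht).continuous) continuous_const
    have hfU : ⋃ n, f n = Set.univ := by
      ext x
      simp only [Set.mem_iUnion, Set.mem_iInter, Set.mem_setOf_eq, Set.mem_univ, iff_true, hf]
      obtain ⟨C, hC⟩ := h x
      exact ⟨⌈C⌉₊, fun k => le_trans (hC ⟨k, rfl⟩) (Nat.le_ceil C)⟩
    obtain ⟨n, x0, hx0⟩ := nonempty_interior_of_iUnion_of_closed hfc hfU
    obtain ⟨r, hr, hball⟩ := Metric.isOpen_iff.1 isOpen_interior x0 hx0
    have hsub : Metric.ball x0 r ⊆ f n := hball.trans interior_subset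
    -- choose k large
    have h2θ : (1:ℝ) < (2:ℝ) ^ θ :=
      (Real.one_lt_rpow_iff_of_pos (by norm_num)).2 (Or.inl ⟨one_lt_two, hθ0⟩)
    obtain ⟨k, hk⟩ := pow_unbounded_of_one_lt ((2 * (n:ℝ) + 1) / (r / 2 * c)) h2θ
    have hpowk : (2:ℝ) ^ (θ * (k : ℝ)) = ((2:ℝ) ^ θ) ^ k := by
      rw [Real.rpow_mul (by norm_num), Real.rpow_natCast]
    set t : ℝ := (2:ℝ) ^ (-(k : ℝ)) with htdef
    have ht : 0 < t := Real.rpow_pos_of_pos two_pos _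
    obtain ⟨z, hz1, hzc⟩ := hslow t ht
    have hx0mem : x0 ∈ f n := hsub (Metric.mem_ball_self hr)
    have hx1mem : x0 + (r / 2) • z ∈ f n := by
      refine hsub ?_
      rw [Metric.mem_ball, dist_eq_norm, add_sub_cancel_left, norm_smul, Real.norm_eq_abs,
        hz1, abs_of_pos (by positivity)]
      linarith
    have e0 : (2:ℝ) ^ (θ * (k : ℝ)) * K x0 t ≤ (n : ℝ) := by
      have := Set.mem_iInter.1 hx0mem k
      exact this
    have e1 : (2:ℝ) ^ (θ * (k : ℝ)) * K (x0 + (r / 2) • z) t ≤ (n : ℝ) := by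
      have := Set.mem_iInter.1 hx1mem k
      exact this
    -- key inequality
    have h1 : K ((r / 2) • z) t = (r / 2) * K z t := by
      rw [hKsmul (r / 2) (by positivity) z t, abs_of_pos (by positivity)]
    have h2 : K ((r / 2) • z) t ≤ K (x0 + (r / 2) • z) t + K (-x0) t := by
      have := hKadd (x0 + (r / 2) • z) (-x0) t ht.le
      have heq : (x0 + (r / 2) • z) + (-x0) = (r / 2) • z := by abel
      rwa [heq] at this
    have h3 : K (-x0) t = K x0 t := by
      have := hKsmul (-1) (by norm_num) x0 t
      simpa using this
    have key : (r / 2) * K z t ≤ K (x0 + (r / 2) • z) t + K x0 t := by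
      rw [← h1, ← h3]; exact h2
    -- contradiction
    have hP : (0:ℝ) < (2:ℝ) ^ (θ * (k : ℝ)) := Real.rpow_pos_of_pos two_pos _
    have hrc : (0:ℝ) < r / 2 * c := by positivity
    rw [div_lt_iff₀ hrc] at hk
    have hk' : 2 * (n:ℝ) + 1 < (2:ℝ) ^ (θ * (k : ℝ)) * (r / 2 * c) := by
      rw [hpowk]; exact hk
    have hm1 : (2:ℝ) ^ (θ * (k : ℝ)) * ((r / 2) * K z t) ≤
        (2:ℝ) ^ (θ * (k : ℝ)) * K (x0 + (r / 2) • z) t +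
        (2:ℝ) ^ (θ * (k : ℝ)) * K x0 t := by
      have := mul_le_mul_of_nonneg_left key hP.le
      rwa [mul_add] at this
    have hm2 : (2:ℝ) ^ (θ * (k : ℝ)) * (r / 2 * c) <
        (2:ℝ) ^ (θ * (k : ℝ)) * (r / 2 * K z t) := by
      refine mul_lt_mul_of_pos_left ?_ hP
      exact mul_lt_mul_of_pos_left hzc (by positivity)
    linarith
  obtain ⟨x, hx⟩ := main
  refine ⟨x, hx, ?_⟩
  intro q hq hmem
  rcases hmem with ⟨hqt, hb⟩ | ⟨hqt, hs⟩
  · exact hx hb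
  · have hp : 0 < q.toReal := ENNReal.toReal_pos hq.ne' hqt
    have h0 := hs.tendsto_atTop_zero
    obtain ⟨C, hC⟩ := h0.bddAbove_range
    apply hx
    refine ⟨(max C 0) ^ q.toReal⁻¹, ?_⟩
    rintro _ ⟨k, rfl⟩
    have hgk : 0 ≤ (2:ℝ) ^ (θ * (k : ℝ)) * K x ((2:ℝ) ^ (-(k : ℝ))) := by
      have h1 := hK0 x ((2:ℝ) ^ (-(k : ℝ))) (le_of_lt (Real.rpow_pos_of_pos two_pos _))
      have h2 : (0:ℝ) < (2:ℝ) ^ (θ * (k : ℝ)) := Real.rpow_pos_of_pos two_pos _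
      positivity
    have hle : ((2:ℝ) ^ (θ * (k : ℝ)) * K x ((2:ℝ) ^ (-(k : ℝ)))) ^ q.toReal ≤ max C 0 :=
      le_trans (hC ⟨k, rfl⟩) (le_max_left _ _)
    calc (2:ℝ) ^ (θ * (k : ℝ)) * K x ((2:ℝ) ^ (-(k : ℝ)))
        = (((2:ℝ) ^ (θ * (k : ℝ)) * K x ((2:ℝ) ^ (-(k : ℝ)))) ^ q.toReal) ^ q.toReal⁻¹ :=
          (Real.rpow_rpow_inv hgk hp.ne').symm
      _ ≤ (max C 0) ^ q.toReal⁻¹ := by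
          refine Real.rpow_le_rpow (by positivity) hle (by positivity)
end

section
/- Suppose there exist a constant δ > 0, a sequence (x_n) in X with ‖x_n‖_X = 1 for all n, and a sequence (b_n) of positive reals with b_n → ∞, such that for every n ∈ ℕ and every y ∈ Y, if ‖x_n − j y‖_X < δ then ‖y‖_Y ≥ b_n. Then there exists a constant c > 0 such that for every t > 0 there is x ∈ X with ‖x‖_X = 1 and K(x,t) > c. -/
open Filter Topology

/-- If there are δ > 0, a sequence (x_n) in the unit sphere of X and positive reals b_n → ∞
such that ‖x_n - j y‖ < δ implies ‖y‖_Y ≥ b_n, then K(S(X),t) > c for all t > 0 and some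
constant c > 0. -/
theorem bad_approximation_implies_slow_decay
    {X : Type*} [NormedAddCommGroup X] [NormedSpace ℝ X] [CompleteSpace X]
    {Y : Type*} [AddCommGroup Y] [Module ℝ Y]
    (NY : Seminorm ℝ Y)
    (j : Y →ₗ[ℝ] X) (M : ℝ) (hM : 0 < M)
    (hj : ∀ y : Y, ‖j y‖ ≤ M * NY y)
    (K : X → ℝ → ℝ)
    (hK : ∀ (x : X) (t : ℝ), K x t = ⨅ y : Y, (‖x - j y‖ + t * NY y))
    (δ : ℝ) (hδ : 0 < δ) (x : ℕ → X) (hx : ∀ n, ‖x n‖ = 1)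
    (b : ℕ → ℝ) (hb : ∀ n, 0 < b n) (hbtop : Tendsto b atTop atTop)
    (h : ∀ (n : ℕ) (y : Y), ‖x n - j y‖ < δ → b n ≤ NY y) :
    ∃ c : ℝ, 0 < c ∧ ∀ t : ℝ, 0 < t → ∃ z : X, ‖z‖ = 1 ∧ c < K z t := by
  refine ⟨δ / 2, by linarith, fun t ht => ?_⟩
  obtain ⟨n, hn⟩ := (hbtop.eventually_ge_atTop (δ / t)).exists
  refine ⟨x n, hx n, ?_⟩
  have hK' : δ ≤ K (x n) t := by
    rw [hK]
    refine le_ciInf fun y => ?_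
    by_cases hc : ‖x n - j y‖ < δ
    · have := h n y hc
      have h1 : δ / t ≤ NY y := le_trans hn this
      have h2 : δ ≤ t * NY y := by
        rw [div_le_iff₀ ht] at h1
        linarith [mul_comm (NY y) t]
      have := norm_nonneg (x n - j y)
      linarith
    · push_neg at hc
      have : 0 ≤ t * NY y := mul_nonneg ht.le (apply_nonneg NY y)
      linarith
  linarith
end

section
/- Let a < b be real numbers and let n be a positive integer with 1/n ≤ b − a. Then there exists a continuous function f : [a,b] → ℝ with sup_{x ∈ [a,b]} |f(x)| = 1 such that for every function g : ℝ → ℝ which is continuous on [a,b] and differentiable on (a,b), if sup_{x ∈ [a,b]} |f(x) − g(x)| < 1/2 then there exists ρ ∈ (a,b) with g'(ρ) ≥ n. -/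
open Filter Topology

/-- On [a,b] there is a continuous function f of uniform norm 1 such that any g, continuous
on [a,b] and differentiable on (a,b), with sup_{[a,b]} |f - g| < 1/2 must have g'(ρ) ≥ n at
some point ρ ∈ (a,b). -/
theorem oscillating_function_bad_C1_approx
    (a b : ℝ) (hab : a < b) (n : ℕ) (hn : 0 < n) (hnab : 1 / (n : ℝ) ≤ b - a) :
    ∃ f : ℝ → ℝ, ContinuousOn f (Set.Icc a b) ∧
      (⨆ x : Set.Icc a b, |f x|) = 1 ∧
      ∀ g : ℝ → ℝ, ContinuousOn g (Set.Icc a b) →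
        (∀ x ∈ Set.Ioo a b, DifferentiableAt ℝ g x) →
        (⨆ x : Set.Icc a b, |f x - g x|) < 1 / 2 →
        ∃ ρ ∈ Set.Ioo a b, (n : ℝ) ≤ deriv g ρ := by
  have hnR : (0:ℝ) < (n:ℝ) := by exact_mod_cast hn
  set f : ℝ → ℝ := fun x => min 1 (2 * (n:ℝ) * (x - a) - 1) with hf
  have hfc : Continuous f := by
    apply Continuous.min continuous_const
    continuity
  have hbd : ∀ x ∈ Set.Icc a b, |f x| ≤ 1 := by
    intro x hx
    rw [abs_le]
    constructor
    · apply le_min (by norm_num)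
      nlinarith [hx.1]
    · exact min_le_left _ _
  haveI : Nonempty (Set.Icc a b) := ⟨⟨a, le_refl a, hab.le⟩⟩
  have hfb : f b = 1 := by
    rw [hf]
    simp only
    apply min_eq_left
    have : (1:ℝ) ≤ (n:ℝ) * (b - a) := by
      rw [div_le_iff₀ hnR] at hnab; linarith [hnab]
    nlinarith
  refine ⟨f, hfc.continuousOn, ?_, ?_⟩
  · apply le_antisymm
    · exact ciSup_le fun x => hbd x x.2
    · calc (1:ℝ) = |f b| := by rw [hfb]; norm_num
        _ ≤ ⨆ x : Set.Icc a b, |f x| := by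
            apply le_ciSup (f := fun x : Set.Icc a b => |f x|)
              ⟨1, by rintro y ⟨x, rfl⟩; exact hbd x x.2⟩ ⟨b, hab.le, le_refl b⟩
  · intro g hgc hgd hsup
    have hbdd : BddAbove (Set.range fun x : Set.Icc a b => |f x - g x|) := by
      rw [show (Set.range fun x : Set.Icc a b => |f x - g x|)
          = (fun x => |f x - g x|) '' Set.Icc a b from
          (Set.image_eq_range (fun x => |f x - g x|) (Set.Icc a b)).symm]
      exact (isCompact_Icc.image_of_continuousOn
        ((hfc.continuousOn.sub hgc).abs)).bddAbove
    have hpt : ∀ x ∈ Set.Icc a b, |f x - g x| < 1 / 2 := by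
      intro x hx
      calc |f x - g x| ≤ ⨆ x : Set.Icc a b, |f x - g x| :=
            le_ciSup hbdd (⟨x, hx⟩ : Set.Icc a b)
        _ < 1 / 2 := hsup
    set c : ℝ := a + 1 / n with hc
    have hac : a < c := by
      rw [hc]; have : (0:ℝ) < 1 / n := by positivity
      linarith
    have hcb : c ≤ b := by rw [hc]; linarith
    have hfa : f a = -1 := by
      rw [hf]; simp only
      rw [show 2 * (n:ℝ) * (a - a) - 1 = -1 by ring]
      exact min_eq_right (by norm_num)
    have hfcv : f c = 1 := by
      rw [hf, hc]; simp only
      apply min_eq_left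
      have : 2 * (n:ℝ) * (a + 1/n - a) - 1 = 1 := by
        field_simp; ring
      linarith [this.ge]
    have hga : g a < -(1/2) := by
      have := hpt a ⟨le_refl a, hab.le⟩
      rw [hfa, abs_lt] at this
      linarith [this.1, this.2]
    have hgcv : 1/2 < g c := by
      have := hpt c ⟨hac.le, hcb⟩
      rw [hfcv, abs_lt] at this
      linarith [this.1, this.2]
    obtain ⟨ρ, hρ, hslope⟩ := exists_hasDerivAt_eq_slope g (deriv g) hac
      (hgc.mono (Set.Icc_subset_Icc le_rfl hcb))
      (fun x hx => (hgd x ⟨hx.1, lt_of_lt_of_le hx.2 hcb⟩).hasDerivAt)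
    refine ⟨ρ, ⟨hρ.1, lt_of_lt_of_le hρ.2 hcb⟩, ?_⟩
    rw [hslope]
    have hca : c - a = 1 / n := by rw [hc]; ring
    rw [hca, le_div_iff₀ (by positivity)]
    have h1 : (n:ℝ) * (1/n) = 1 := by field_simp
    linarith
end

section
/- If there exist t₀ > 0 and a constant c < 1 such that K(x, t₀) ≤ c for every x ∈ X with ‖x‖_X = 1, then j is surjective. Equivalently, if j is not surjective, then for every t > 0 and every c < 1 there exists x ∈ X with ‖x‖_X = 1 and K(x,t) > c. -/
open Filter Topology

/-- For a couple (X,Y) of Banach spaces with Y continuously and injectively embedded in X: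
if K(x,t₀) ≤ c < 1 for every x in the unit sphere of X and some t₀ > 0, then the embedding
is surjective, i.e. X = Y. -/
theorem K_bounded_away_from_one_implies_surjective
    {X : Type*} [NormedAddCommGroup X] [NormedSpace ℝ X] [CompleteSpace X]
    {Y : Type*} [NormedAddCommGroup Y] [NormedSpace ℝ Y] [CompleteSpace Y]
    (j : Y →L[ℝ] X) (hinj : Function.Injective j)
    (K : X → ℝ → ℝ)
    (hK : ∀ (x : X) (t : ℝ), K x t = ⨅ y : Y, (‖x - j y‖ + t * ‖y‖))
    (t₀ : ℝ) (ht₀ : 0 < t₀) (c : ℝ) (hc : c < 1)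
    (h : ∀ x : X, ‖x‖ = 1 → K x t₀ ≤ c) :
    Function.Surjective j := by
  set r : ℝ := (max c 0 + 1) / 2 with hr_def
  have hm0 : 0 ≤ max c 0 := le_max_right _ _
  have hm1 : max c 0 < 1 := max_lt hc one_pos
  have hr0 : 0 < r := by rw [hr_def]; linarith
  have hr1 : r < 1 := by rw [hr_def]; linarith
  have hmr : max c 0 < r := by rw [hr_def]; linarith
  have key : ∀ x : X, ∃ y : Y, ‖x - j y‖ ≤ r * ‖x‖ ∧ t₀ * ‖y‖ ≤ r * ‖x‖ := by
    intro x
    rcases eq_or_ne x 0 with hx | hx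
    · exact ⟨0, by simp [hx]⟩
    · have hxn : 0 < ‖x‖ := norm_pos_iff.mpr hx
      set z := ‖x‖⁻¹ • x with hz_def
      have hz : ‖z‖ = 1 := by
        rw [hz_def, norm_smul, norm_inv, norm_norm, inv_mul_cancel₀ hxn.ne']
      have hlt : K z t₀ < r :=
        lt_of_le_of_lt ((h z hz).trans (le_max_left c 0)) hmr
      rw [hK] at hlt
      obtain ⟨y, hy⟩ := exists_lt_of_ciInf_lt hlt
      have h1 : ‖z - j y‖ ≤ r := by
        have := mul_nonneg ht₀.le (norm_nonneg y); linarith [hy.le]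
      have h2 : t₀ * ‖y‖ ≤ r := by
        have := norm_nonneg (z - j y); linarith [hy.le]
      refine ⟨‖x‖ • y, ?_, ?_⟩
      · have : x - j (‖x‖ • y) = ‖x‖ • (z - j y) := by
          rw [hz_def, smul_sub, smul_smul, mul_inv_cancel₀ hxn.ne', one_smul, map_smul]
        rw [this, norm_smul, norm_norm, mul_comm]
        exact mul_le_mul_of_nonneg_right h1 hxn.le
      · rw [norm_smul, norm_norm]
        calc t₀ * (‖x‖ * ‖y‖) = (t₀ * ‖y‖) * ‖x‖ := by ring
        _ ≤ r * ‖x‖ := mul_le_mul_of_nonneg_right h2 hxn.le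
  choose f hf1 hf2 using key
  intro x
  set u : ℕ → X := fun n => Nat.rec x (fun _ xn => xn - j (f xn)) n with hu_def
  have huS : ∀ n, u (n + 1) = u n - j (f (u n)) := fun n => rfl
  have hnorm : ∀ n, ‖u n‖ ≤ r ^ n * ‖x‖ := by
    intro n
    induction n with
    | zero => show ‖x‖ ≤ r ^ 0 * ‖x‖; simp
    | succ n ih =>
      calc ‖u (n + 1)‖ ≤ r * ‖u n‖ := hf1 (u n)
      _ ≤ r * (r ^ n * ‖x‖) := mul_le_mul_of_nonneg_left ih hr0.le
      _ = r ^ (n + 1) * ‖x‖ := by ring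
  have hsum : Summable fun n => f (u n) := by
    apply Summable.of_norm_bounded (g := fun n => (r * ‖x‖ / t₀) * r ^ n)
      ((summable_geometric_of_lt_one hr0.le hr1).mul_left _)
    intro n
    have h2 := hf2 (u n)
    have : t₀ * ‖f (u n)‖ ≤ r * (r ^ n * ‖x‖) :=
      h2.trans (mul_le_mul_of_nonneg_left (hnorm n) hr0.le)
    rw [div_mul_eq_mul_div, le_div_iff₀ ht₀]
    nlinarith [norm_nonneg (f (u n))]
  refine ⟨∑' n, f (u n), ?_⟩
  have hjs : HasSum (fun n => j (f (u n))) (j (∑' n, f (u n))) :=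
    hsum.hasSum.mapL j
  have htel : ∀ n, j (f (u n)) = u n - u (n + 1) := by
    intro n; rw [huS n]; abel
  have hu0 : Tendsto u atTop (𝓝 0) := by
    apply squeeze_zero_norm hnorm
    have := (tendsto_pow_atTop_nhds_zero_of_lt_one hr0.le hr1).mul_const ‖x‖
    simpa using this
  have hpartial : Tendsto (fun n => ∑ i ∈ Finset.range n, j (f (u i))) atTop (𝓝 x) := by
    have heq : ∀ n, ∑ i ∈ Finset.range n, j (f (u i)) = x - u n := by
      intro n
      simp only [htel]
      rw [Finset.sum_range_sub' u]
      rfl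
    simp only [heq]
    simpa using tendsto_const_nhds.sub hu0
  have := hjs.tendsto_sum_nat
  exact tendsto_nhds_unique hpartial this |>.symm
end

section
/- If there exist t₀ > 0 and a constant c < 1 such that K(x, t₀) ≤ c for every x ∈ X with N_X(x) = 1, then j is surjective. -/
open Filter Topology

private lemma pnorm_sum_le {Y : Type*} [AddCommGroup Y] (p : ℝ) (hp0 : 0 < p) (NY : Y → ℝ)
    (hNY0 : NY 0 = 0)
    (hNYadd : ∀ y₁ y₂ : Y, NY (y₁ + y₂) ^ p ≤ NY y₁ ^ p + NY y₂ ^ p)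
    (s : Finset ℕ) (f : ℕ → Y) :
    NY (∑ k ∈ s, f k) ^ p ≤ ∑ k ∈ s, NY (f k) ^ p := by
  classical
  induction s using Finset.cons_induction with
  | empty => simp [hNY0, Real.zero_rpow (ne_of_gt hp0)]
  | cons a s ha ih =>
    rw [Finset.sum_cons, Finset.sum_cons]
    exact (hNYadd _ _).trans (by linarith)

set_option maxHeartbeats 1000000 in
/-- For p-normed quasi-Banach spaces X, Y with Y continuously embedded in X via j:
if K(x,t₀) ≤ c < 1 for every x with N_X(x) = 1 and some t₀ > 0, then j is surjective. -/
theorem K_bounded_away_from_one_implies_surjective_pnormed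
    (p : ℝ) (hp0 : 0 < p) (hp1 : p ≤ 1)
    {X : Type*} [AddCommGroup X] [Module ℝ X]
    (NX : X → ℝ)
    (hNXnonneg : ∀ x, 0 ≤ NX x)
    (hNXzero : ∀ x, NX x = 0 ↔ x = 0)
    (hNXsmul : ∀ (r : ℝ) (x : X), NX (r • x) = |r| * NX x)
    (hNXadd : ∀ x₁ x₂ : X, NX (x₁ + x₂) ^ p ≤ NX x₁ ^ p + NX x₂ ^ p)
    (hXcomplete : ∀ u : ℕ → X,
      (∀ ε : ℝ, 0 < ε → ∃ N : ℕ, ∀ m ≥ N, ∀ n ≥ N, NX (u m - u n) ^ p < ε) →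
      ∃ x : X, ∀ ε : ℝ, 0 < ε → ∃ N : ℕ, ∀ n ≥ N, NX (u n - x) ^ p < ε)
    {Y : Type*} [AddCommGroup Y] [Module ℝ Y]
    (NY : Y → ℝ)
    (hNYnonneg : ∀ y, 0 ≤ NY y)
    (hNYzero : ∀ y, NY y = 0 ↔ y = 0)
    (hNYsmul : ∀ (r : ℝ) (y : Y), NY (r • y) = |r| * NY y)
    (hNYadd : ∀ y₁ y₂ : Y, NY (y₁ + y₂) ^ p ≤ NY y₁ ^ p + NY y₂ ^ p)
    (hYcomplete : ∀ v : ℕ → Y,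
      (∀ ε : ℝ, 0 < ε → ∃ N : ℕ, ∀ m ≥ N, ∀ n ≥ N, NY (v m - v n) ^ p < ε) →
      ∃ y : Y, ∀ ε : ℝ, 0 < ε → ∃ N : ℕ, ∀ n ≥ N, NY (v n - y) ^ p < ε)
    (j : Y →ₗ[ℝ] X) (M : ℝ) (hM : 0 < M)
    (hj : ∀ y : Y, NX (j y) ≤ M * NY y)
    (K : X → ℝ → ℝ)
    (hK : ∀ (x : X) (t : ℝ), K x t = ⨅ y : Y, (NX (x - j y) + t * NY y))
    (t₀ : ℝ) (ht₀ : 0 < t₀) (c : ℝ) (hc : c < 1)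
    (h : ∀ x : X, NX x = 1 → K x t₀ ≤ c) :
    Function.Surjective j := by
  classical
  have hNX0 : NX (0 : X) = 0 := (hNXzero 0).mpr rfl
  have hNY0 : NY (0 : Y) = 0 := (hNYzero 0).mpr rfl
  set c' : ℝ := (max c 0 + 1) / 2 with hc'def
  have hmax1 : max c 0 < 1 := max_lt hc one_pos
  have hc'0 : 0 < c' := by
    have : (0:ℝ) ≤ max c 0 := le_max_right _ _
    simp only [hc'def]; linarith
  have hc'1 : c' < 1 := by simp only [hc'def]; linarith
  have hmaxc' : max c 0 < c' := by simp only [hc'def]; linarith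
  -- step lemma
  have step : ∀ x : X, ∃ y : Y, NX (x - j y) ≤ c' * NX x ∧ t₀ * NY y ≤ c' * NX x := by
    intro x
    rcases eq_or_ne x 0 with rfl | hx
    · exact ⟨0, by simp [hNX0, hNY0]⟩
    · have hr : 0 < NX x := lt_of_le_of_ne (hNXnonneg x) (Ne.symm (fun h0 => hx ((hNXzero x).mp h0)))
      set r := NX x with hrdef
      have hx' : NX (r⁻¹ • x) = 1 := by
        rw [hNXsmul, abs_of_pos (inv_pos.mpr hr)]
        field_simp
        exact hrdef.symm
      have hKx := h _ hx'
      rw [hK] at hKx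
      have hlt : (⨅ y : Y, NX (r⁻¹ • x - j y) + t₀ * NY y) < c' :=
        lt_of_le_of_lt hKx (lt_of_le_of_lt (le_max_left c 0) hmaxc')
      obtain ⟨y₀, hy₀⟩ := exists_lt_of_ciInf_lt hlt
      refine ⟨r • y₀, ?_, ?_⟩
      · have h1 : x - j (r • y₀) = r • (r⁻¹ • x - j y₀) := by
          rw [map_smul, smul_sub, smul_inv_smul₀ (ne_of_gt hr)]
        rw [h1, hNXsmul, abs_of_pos hr]
        have h2 : NX (r⁻¹ • x - j y₀) ≤ c' := by
          have := mul_nonneg ht₀.le (hNYnonneg y₀)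
          linarith
        nlinarith
      · rw [hNYsmul, abs_of_pos hr]
        have h2 : t₀ * NY y₀ ≤ c' := by
          have := hNXnonneg (r⁻¹ • x - j y₀)
          linarith
        nlinarith
  choose g hg1 hg2 using step
  intro x
  -- the iterative sequences
  set xs : ℕ → X := fun n => Nat.rec x (fun _ xn => xn - j (g xn)) n with hxsdef
  have hxs : ∀ n, xs (n+1) = xs n - j (g (xs n)) := fun n => rfl
  set ys : ℕ → Y := fun n => g (xs n) with hysdef
  set v : ℕ → Y := fun n => ∑ k ∈ Finset.range n, ys k with hvdef
  have hxv : ∀ n, xs n = x - j (v n) := by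
    intro n
    induction n with
    | zero => simp [hvdef, hxsdef]
    | succ n ih =>
      have hv1 : v (n+1) = v n + ys n := Finset.sum_range_succ ys n
      rw [hxs, hv1, map_add, ← sub_sub, ← ih]
  have hdecay : ∀ n, NX (xs n) ≤ c' ^ n * NX x := by
    intro n
    induction n with
    | zero => show NX x ≤ c' ^ 0 * NX x; simp
    | succ n ih =>
      calc NX (xs (n+1)) ≤ c' * NX (xs n) := by rw [hxs]; exact hg1 (xs n)
        _ ≤ c' * (c' ^ n * NX x) := by
            exact mul_le_mul_of_nonneg_left ih hc'0.le
        _ = c' ^ (n+1) * NX x := by ring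
  have hyb : ∀ n, NY (ys n) ≤ c' / t₀ * (c' ^ n * NX x) := by
    intro n
    have h1 : t₀ * NY (ys n) ≤ c' * NX (xs n) := hg2 (xs n)
    have h2 : c' * NX (xs n) ≤ c' * (c' ^ n * NX x) :=
      mul_le_mul_of_nonneg_left (hdecay n) hc'0.le
    rw [div_mul_eq_mul_div, le_div_iff₀ ht₀]
    nlinarith
  set q : ℝ := c' ^ p with hqdef
  have hq0 : 0 < q := Real.rpow_pos_of_pos hc'0 p
  have hq1 : q < 1 := Real.rpow_lt_one hc'0.le hc'1 hp0
  have hpow : ∀ n : ℕ, ((c' : ℝ) ^ n) ^ p = q ^ n := by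
    intro n
    rw [← Real.rpow_natCast c' n, ← Real.rpow_natCast q n, hqdef,
      ← Real.rpow_mul hc'0.le, ← Real.rpow_mul hc'0.le, mul_comm]
  set B : ℝ := (c' / t₀ * NX x) ^ p with hBdef
  have hB0 : 0 ≤ B := Real.rpow_nonneg (mul_nonneg (div_nonneg hc'0.le ht₀.le) (hNXnonneg x)) p
  have hgeo : ∀ n m : ℕ, n ≤ m → ∑ k ∈ Finset.Ico n m, q ^ k ≤ q ^ n / (1 - q) := by
    intro n m hnm
    have h1q : 0 < 1 - q := by linarith
    have heq : (q ^ m - q ^ n) / (q - 1) = (q ^ n - q ^ m) / (1 - q) := by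
      rw [div_eq_div_iff (by linarith) (by linarith)]; ring
    rw [geom_sum_Ico (ne_of_lt hq1) hnm, heq, div_le_div_iff₀ h1q h1q]
    have hqm : 0 ≤ q ^ m := pow_nonneg hq0.le m
    nlinarith
  -- the key Cauchy bound
  have hvbound : ∀ n m : ℕ, n ≤ m → NY (v m - v n) ^ p ≤ B * (q ^ n / (1 - q)) := by
    intro n m hnm
    have hsub : v m - v n = ∑ k ∈ Finset.Ico n m, ys k := by
      rw [hvdef]; exact (Finset.sum_Ico_eq_sub ys hnm).symm
    rw [hsub]
    calc NY (∑ k ∈ Finset.Ico n m, ys k) ^ p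
        ≤ ∑ k ∈ Finset.Ico n m, NY (ys k) ^ p :=
          pnorm_sum_le p hp0 NY hNY0 hNYadd _ _
      _ ≤ ∑ k ∈ Finset.Ico n m, B * q ^ k := by
          refine Finset.sum_le_sum (fun k _ => ?_)
          have h1 : NY (ys k) ^ p ≤ (c' / t₀ * (c' ^ k * NX x)) ^ p :=
            Real.rpow_le_rpow (hNYnonneg _) (hyb k) hp0.le
          refine h1.trans (le_of_eq ?_)
          have heq : c' / t₀ * (c' ^ k * NX x) = (c' / t₀ * NX x) * c' ^ k := by ring
          rw [heq, Real.mul_rpow (mul_nonneg (div_nonneg hc'0.le ht₀.le) (hNXnonneg x))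
            (pow_nonneg hc'0.le k), hpow, hBdef]
      _ = B * ∑ k ∈ Finset.Ico n m, q ^ k := by rw [Finset.mul_sum]
      _ ≤ B * (q ^ n / (1 - q)) := mul_le_mul_of_nonneg_left (hgeo n m hnm) hB0
  have hsym : ∀ a b : ℕ, NY (v a - v b) = NY (v b - v a) := by
    intro a b
    rw [← neg_sub (v b) (v a), ← neg_one_smul ℝ, hNYsmul]
    simp
  -- Cauchy
  have hcauchy : ∀ ε : ℝ, 0 < ε → ∃ N : ℕ, ∀ m ≥ N, ∀ n ≥ N, NY (v m - v n) ^ p < ε := by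
    intro ε hε
    have h1q : 0 < 1 - q := by linarith
    obtain ⟨N, hN⟩ := exists_pow_lt_of_lt_one
      (show (0:ℝ) < ε * (1 - q) / (B + 1) from div_pos (by positivity) (by linarith)) hq1
    refine ⟨N, fun m hm n hn => ?_⟩
    have key : ∀ a b : ℕ, N ≤ a → a ≤ b → NY (v b - v a) ^ p < ε := by
      intro a b ha hab
      have h1 := hvbound a b hab
      have h2 : q ^ a ≤ q ^ N := pow_le_pow_of_le_one hq0.le hq1.le ha
      have h3 : B * (q ^ a / (1 - q)) ≤ B * (q ^ N / (1 - q)) := by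
        apply mul_le_mul_of_nonneg_left _ hB0
        exact div_le_div_of_nonneg_right h2 (by linarith)
      have h4 : B * (q ^ N / (1 - q)) < ε := by
        rw [lt_div_iff₀ (show (0:ℝ) < B + 1 by linarith)] at hN
        rw [← mul_div_assoc, div_lt_iff₀ h1q]
        have hqN : 0 ≤ q ^ N := pow_nonneg hq0.le N
        nlinarith
      linarith
    rcases le_total n m with hnm | hmn
    · exact key n m hn hnm
    · rw [hsym]; exact key m n hm hmn
  obtain ⟨y, hy⟩ := hYcomplete v hcauchy
  refine ⟨y, ?_⟩
  -- show NX (x - j y) ^ p < ε for all ε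
  have hMp : 0 < M ^ p := Real.rpow_pos_of_pos hM p
  have key : ∀ ε : ℝ, 0 < ε → NX (x - j y) ^ p < ε := by
    intro ε hε
    -- choose n with (c'^n * NX x)^p < ε/2 and M^p * NY (v n - y)^p < ε/2
    have hA0 : 0 ≤ (NX x) ^ p := Real.rpow_nonneg (hNXnonneg x) p
    obtain ⟨N₁, hN₁⟩ := exists_pow_lt_of_lt_one
      (show (0:ℝ) < ε / 2 / ((NX x) ^ p + 1) from div_pos (by linarith) (by linarith)) hq1
    obtain ⟨N₂, hN₂⟩ := hy (ε / 2 / M ^ p) (by positivity)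
    set n := max N₁ N₂ with hndef
    have h1 : NX (xs n) ^ p ≤ (NX x) ^ p * q ^ n :=
      (Real.rpow_le_rpow (hNXnonneg _) (hdecay n) hp0.le).trans (le_of_eq (by
        rw [Real.mul_rpow (pow_nonneg hc'0.le n) (hNXnonneg x), hpow, mul_comm]))
    have h2 : q ^ n ≤ q ^ N₁ := pow_le_pow_of_le_one hq0.le hq1.le (le_max_left _ _)
    have h3 : NX (xs n) ^ p < ε / 2 := by
      rw [lt_div_iff₀ (show (0:ℝ) < (NX x) ^ p + 1 by linarith)] at hN₁
      nlinarith [mul_le_mul_of_nonneg_left h2 hA0, pow_nonneg hq0.le N₁]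
    have h4 : NY (v n - y) ^ p < ε / 2 / M ^ p := hN₂ n (le_max_right _ _)
    have h5 : NX (j (v n) - j y) ^ p ≤ M ^ p * NY (v n - y) ^ p := by
      rw [← map_sub j]
      calc NX (j (v n - y)) ^ p ≤ (M * NY (v n - y)) ^ p :=
            Real.rpow_le_rpow (hNXnonneg _) (hj _) hp0.le
        _ = M ^ p * NY (v n - y) ^ p := Real.mul_rpow hM.le (hNYnonneg _)
    have h6 : NX (x - j y) ^ p ≤ NX (x - j (v n)) ^ p + NX (j (v n) - j y) ^ p := by
      have : x - j y = (x - j (v n)) + (j (v n) - j y) := by abel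
      rw [this]; exact hNXadd _ _
    have h7 : x - j (v n) = xs n := (hxv n).symm
    rw [h7] at h6
    have h8 : M ^ p * NY (v n - y) ^ p < ε / 2 := by
      rw [lt_div_iff₀ hMp] at h4
      nlinarith
    linarith
  have hle : NX (x - j y) ^ p ≤ 0 := by
    by_contra hpos
    push_neg at hpos
    exact lt_irrefl _ (key _ hpos)
  have hzero : NX (x - j y) = 0 := by
    by_contra hne
    have hpos : 0 < NX (x - j y) := lt_of_le_of_ne (hNXnonneg _) (Ne.symm hne)
    exact absurd hle (not_le.mpr (Real.rpow_pos_of_pos hpos p))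
  have hsub : x - j y = 0 := (hNXzero _).mp hzero
  linear_combination (norm := abel) - (sub_eq_zero.mp hsub)
end

section
/- Assume j is not surjective. Then there exist a constant δ > 0, a sequence (x_n) in X with ‖x_n‖_X = 1 for all n, and a sequence (b_n) of positive reals with b_n → ∞, such that for every n ∈ ℕ and every y ∈ Y, if ‖x_n − j y‖_X < δ then ‖y‖_Y > b_n. -/
open Filter Topology

/-- Successive approximation: if every unit vector of `X` can be approximated within `1/2`
by `j y` with `‖y‖ ≤ m`, then `j` is surjective. -/
lemma surjective_of_approx
    {X : Type*} [NormedAddCommGroup X] [NormedSpace ℝ X]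
    {Y : Type*} [NormedAddCommGroup Y] [NormedSpace ℝ Y] [CompleteSpace Y]
    (j : Y →L[ℝ] X) (m : ℝ) (hm : 0 ≤ m)
    (h : ∀ x : X, ‖x‖ = 1 → ∃ y : Y, ‖x - j y‖ < 1/2 ∧ ‖y‖ ≤ m) :
    Function.Surjective j := by
  -- scaled version
  have step : ∀ x : X, ∃ y : Y, ‖x - j y‖ ≤ ‖x‖ / 2 ∧ ‖y‖ ≤ m * ‖x‖ := by
    intro x
    by_cases hx : x = 0
    · exact ⟨0, by simp [hx]⟩
    · have hxn : ‖x‖ ≠ 0 := norm_ne_zero_iff.mpr hx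
      have hxpos : (0:ℝ) < ‖x‖ := norm_pos_iff.mpr hx
      obtain ⟨y, hy1, hy2⟩ := h (‖x‖⁻¹ • x) (by
        rw [norm_smul, norm_inv, norm_norm, inv_mul_cancel₀ hxn])
      refine ⟨‖x‖ • y, ?_, ?_⟩
      · have heq : x - j (‖x‖ • y) = ‖x‖ • (‖x‖⁻¹ • x - j y) := by
          rw [smul_sub, smul_smul, mul_inv_cancel₀ hxn, one_smul, map_smul]
        rw [heq, norm_smul, Real.norm_of_nonneg hxpos.le]
        nlinarith [norm_nonneg (‖x‖⁻¹ • x - j y)]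
      · rw [norm_smul, norm_norm, mul_comm]
        exact mul_le_mul_of_nonneg_right hy2 hxpos.le
  choose F hF1 hF2 using step
  intro x
  set g : X → X := fun z => z - j (F z) with hg
  set u : ℕ → X := fun n => g^[n] x with hu
  have hu0 : u 0 = x := rfl
  have husucc : ∀ n, u (n + 1) = u n - j (F (u n)) := by
    intro n
    simp only [hu, Function.iterate_succ_apply']
    rfl
  have hubound : ∀ n, ‖u n‖ ≤ ‖x‖ * (1/2)^n := by
    intro n
    induction n with
    | zero => simp [hu0]
    | succ n ih =>
      rw [husucc]
      calc ‖u n - j (F (u n))‖ ≤ ‖u n‖ / 2 := hF1 _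
        _ ≤ (‖x‖ * (1/2)^n) / 2 := by linarith
        _ = ‖x‖ * (1/2)^(n+1) := by ring
  have hsum : Summable (fun n => F (u n)) := by
    apply Summable.of_norm_bounded (g := fun n => (m * ‖x‖) * (1/2)^n)
      ((summable_geometric_two).mul_left _)
    intro n
    calc ‖F (u n)‖ ≤ m * ‖u n‖ := hF2 _
      _ ≤ m * (‖x‖ * (1/2)^n) := by
          exact mul_le_mul_of_nonneg_left (hubound n) hm
      _ = (m * ‖x‖) * (1/2)^n := by ring
  refine ⟨∑' n, F (u n), ?_⟩
  have hjsum : Summable (fun n => j (F (u n))) := hsum.map j j.continuous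
  have hmap : j (∑' n, F (u n)) = ∑' n, j (F (u n)) := j.map_tsum hsum
  rw [hmap]
  -- partial sums telescope to x - u N
  have hps : ∀ N, ∑ n ∈ Finset.range N, j (F (u n)) = x - u N := by
    intro N
    have : ∀ n, j (F (u n)) = u n - u (n + 1) := fun n => by
      rw [husucc]; abel
    simp only [this]
    rw [Finset.sum_range_sub' u]
    rw [hu0]
  have hu_lim : Tendsto u atTop (𝓝 0) := by
    apply squeeze_zero_norm hubound
    have : Tendsto (fun n : ℕ => ‖x‖ * (1/2 : ℝ)^n) atTop (𝓝 (‖x‖ * 0)) :=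
      (tendsto_pow_atTop_nhds_zero_of_lt_one (by norm_num) (by norm_num)).const_mul _
    simpa using this
  have h1 : Tendsto (fun N => ∑ n ∈ Finset.range N, j (F (u n))) atTop (𝓝 (x - 0)) := by
    simp only [hps]
    exact tendsto_const_nhds.sub hu_lim
  have h2 : Tendsto (fun N => ∑ n ∈ Finset.range N, j (F (u n))) atTop
      (𝓝 (∑' n, j (F (u n)))) := hjsum.hasSum.tendsto_sum_nat
  have := tendsto_nhds_unique h2 h1
  rw [this]; simp

/-- If the continuous injective embedding j : Y → X of Banach spaces is not surjective, then
there are δ > 0, unit vectors (x_n) in X and positive reals b_n → ∞ such that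
‖x_n - j y‖ < δ implies ‖y‖ > b_n. -/
theorem not_surjective_implies_bad_approximation
    {X : Type*} [NormedAddCommGroup X] [NormedSpace ℝ X] [CompleteSpace X]
    {Y : Type*} [NormedAddCommGroup Y] [NormedSpace ℝ Y] [CompleteSpace Y]
    (j : Y →L[ℝ] X) (hinj : Function.Injective j)
    (hns : ¬ Function.Surjective j) :
    ∃ δ : ℝ, 0 < δ ∧ ∃ x : ℕ → X, (∀ n, ‖x n‖ = 1) ∧
      ∃ b : ℕ → ℝ, (∀ n, 0 < b n) ∧ Tendsto b atTop atTop ∧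
        ∀ (n : ℕ) (y : Y), ‖x n - j y‖ < δ → b n < ‖y‖ := by
  have key : ∀ n : ℕ, ∃ x : X, ‖x‖ = 1 ∧ ∀ y : Y, ‖x - j y‖ < 1/2 → (n : ℝ) + 1 < ‖y‖ := by
    intro n
    by_contra hcon
    push_neg at hcon
    apply hns
    apply surjective_of_approx j ((n : ℝ) + 1) (by positivity)
    intro x hx
    obtain ⟨y, hy1, hy2⟩ := hcon x hx
    exact ⟨y, hy1, hy2⟩
  choose x hx1 hx2 using key
  refine ⟨1/2, by norm_num, x, hx1, fun n => (n : ℝ) + 1, fun n => by positivity, ?_, hx2⟩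
  exact tendsto_atTop_add_const_right _ _ tendsto_natCast_atTop_atTop
end

section
/- Assume j is not surjective. Then for every θ ∈ (0,1) there exists x ∈ X such that the set { 2^{θk}·K(x, 2^{−k}) : k ∈ ℕ } is unbounded above; in particular x does not belong to A_{θ,q} for any q ∈ (0,∞], so the inclusion of A_{θ,q} into X is strict. -/
open Filter Topology

section Kf
variable {X : Type*} [NormedAddCommGroup X] [NormedSpace ℝ X]
  {Y : Type*} [NormedAddCommGroup Y] [NormedSpace ℝ Y]
  (j : Y →L[ℝ] X)

noncomputable def Kf (x : X) (t : ℝ) : ℝ := ⨅ y : Y, (‖x - j y‖ + t * ‖y‖)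

lemma Kf_bddBelow (x : X) (t : ℝ) (ht : 0 ≤ t) :
    BddBelow (Set.range fun y : Y => ‖x - j y‖ + t * ‖y‖) :=
  ⟨0, by rintro _ ⟨y, rfl⟩; positivity⟩

lemma Kf_nonneg (x : X) (t : ℝ) (ht : 0 ≤ t) : 0 ≤ Kf j x t :=
  Real.iInf_nonneg fun y => by positivity

lemma Kf_le (x : X) (t : ℝ) (ht : 0 ≤ t) (y : Y) : Kf j x t ≤ ‖x - j y‖ + t * ‖y‖ :=
  ciInf_le (Kf_bddBelow j x t ht) y

lemma Kf_le_norm (x : X) (t : ℝ) (ht : 0 ≤ t) : Kf j x t ≤ ‖x‖ := by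
  simpa using Kf_le j x t ht 0

lemma Kf_lipschitz (x x' : X) (t : ℝ) (ht : 0 ≤ t) :
    Kf j x t ≤ Kf j x' t + ‖x - x'‖ := by
  rw [← sub_le_iff_le_add]
  apply le_ciInf
  intro y
  rw [sub_le_iff_le_add]
  calc Kf j x t ≤ ‖x - j y‖ + t * ‖y‖ := Kf_le j x t ht y
    _ ≤ (‖x' - j y‖ + ‖x - x'‖) + t * ‖y‖ := by
        gcongr
        calc ‖x - j y‖ = ‖(x' - j y) + (x - x')‖ := by congr 1; abel
          _ ≤ ‖x' - j y‖ + ‖x - x'‖ := norm_add_le _ _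
    _ = ‖x' - j y‖ + t * ‖y‖ + ‖x - x'‖ := by ring

lemma Kf_add_le (a b : X) (t : ℝ) (ht : 0 ≤ t) :
    Kf j (a + b) t ≤ Kf j a t + Kf j b t := by
  refine le_of_forall_pos_le_add fun ε hε => ?_
  obtain ⟨y₁, hy₁⟩ := exists_lt_of_ciInf_lt (show Kf j a t < Kf j a t + ε / 2 by linarith)
  obtain ⟨y₂, hy₂⟩ := exists_lt_of_ciInf_lt (show Kf j b t < Kf j b t + ε / 2 by linarith)
  have h1 : ‖(a + b) - j (y₁ + y₂)‖ ≤ ‖a - j y₁‖ + ‖b - j y₂‖ := by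
    calc ‖(a + b) - j (y₁ + y₂)‖ = ‖(a - j y₁) + (b - j y₂)‖ := by
          rw [map_add]; congr 1; abel
      _ ≤ ‖a - j y₁‖ + ‖b - j y₂‖ := norm_add_le _ _
  have h2 : t * ‖y₁ + y₂‖ ≤ t * (‖y₁‖ + ‖y₂‖) := by
    have := norm_add_le y₁ y₂; nlinarith
  have h3 := Kf_le j (a + b) t ht (y₁ + y₂)
  nlinarith

lemma Kf_smul_le (c : ℝ) (x : X) (t : ℝ) (ht : 0 ≤ t) :
    Kf j (c • x) t ≤ |c| * Kf j x t := by
  rcases eq_or_ne c 0 with rfl | hc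
  · simp only [zero_smul, abs_zero, zero_mul]
    simpa using Kf_le j 0 t ht 0
  · have hc' : 0 < |c| := abs_pos.mpr hc
    rw [← div_le_iff₀' hc']
    apply le_ciInf
    intro y
    rw [div_le_iff₀' hc']
    calc Kf j (c • x) t ≤ ‖c • x - j (c • y)‖ + t * ‖c • y‖ := Kf_le j _ t ht _
      _ = |c| * (‖x - j y‖ + t * ‖y‖) := by
          rw [map_smul, ← smul_sub, norm_smul, norm_smul, Real.norm_eq_abs]; ring

lemma Kf_continuous (t : ℝ) (ht : 0 ≤ t) : Continuous fun x : X => Kf j x t := by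
  have : LipschitzWith 1 fun x : X => Kf j x t := by
    apply LipschitzWith.of_dist_le_mul
    intro x x'
    rw [Real.dist_eq, dist_eq_norm, NNReal.coe_one, one_mul, abs_sub_le_iff]
    constructor
    · linarith [Kf_lipschitz j x x' t ht]
    · have := Kf_lipschitz j x' x t ht
      rw [norm_sub_rev] at this; linarith
  exact this.continuous

end Kf

section Main
variable {X : Type*} [NormedAddCommGroup X] [NormedSpace ℝ X] [CompleteSpace X]
  {Y : Type*} [NormedAddCommGroup Y] [NormedSpace ℝ Y] [CompleteSpace Y]

lemma surj_of_all_bdd (j : Y →L[ℝ] X) {θ : ℝ} (hθ0 : 0 < θ)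
    (hbd : ∀ x : X, BddAbove
      (Set.range fun k : ℕ => (2 : ℝ) ^ (θ * (k : ℝ)) * Kf j x ((2 : ℝ) ^ (-(k : ℝ))))) :
    Function.Surjective j := by
  have htp : ∀ k : ℕ, (0 : ℝ) < (2 : ℝ) ^ (-(k : ℝ)) :=
    fun k => Real.rpow_pos_of_pos two_pos _
  have hep : ∀ k : ℕ, (0 : ℝ) < (2 : ℝ) ^ (θ * (k : ℝ)) :=
    fun k => Real.rpow_pos_of_pos two_pos _
  set S : ℕ → Set X := fun n =>
    {x | ∀ k : ℕ, (2 : ℝ) ^ (θ * (k : ℝ)) * Kf j x ((2 : ℝ) ^ (-(k : ℝ))) ≤ n} with hS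
  have hclosed : ∀ n, IsClosed (S n) := by
    intro n
    have : S n = ⋂ k : ℕ,
        {x | (2 : ℝ) ^ (θ * (k : ℝ)) * Kf j x ((2 : ℝ) ^ (-(k : ℝ))) ≤ n} := by
      ext x; simp [hS, Set.mem_iInter]
    rw [this]
    exact isClosed_iInter fun k =>
      isClosed_le (continuous_const.mul (Kf_continuous j _ (htp k).le)) continuous_const
  have hunion : ⋃ n, S n = Set.univ := by
    rw [Set.eq_univ_iff_forall]
    intro x
    obtain ⟨C, hC⟩ := hbd x
    refine Set.mem_iUnion.2 ⟨⌈C⌉₊, fun k => ?_⟩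
    exact le_trans (hC ⟨k, rfl⟩) (Nat.le_ceil C)
  obtain ⟨n, hn⟩ := nonempty_interior_of_iUnion_of_closed hclosed hunion
  obtain ⟨x₀, hx₀⟩ := hn
  obtain ⟨r, hr, hball⟩ := Metric.isOpen_iff.mp isOpen_interior x₀ hx₀
  have hball' : Metric.ball x₀ r ⊆ S n := hball.trans interior_subset
  have hx₀S : x₀ ∈ S n := hball' (Metric.mem_ball_self hr)
  -- bound on a ball
  have hzball : ∀ z : X, ‖z‖ < r → ∀ k : ℕ,
      Kf j z ((2 : ℝ) ^ (-(k : ℝ))) ≤ 2 * n * (2 : ℝ) ^ (-(θ * (k : ℝ))) := by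
    intro z hz k
    have h1 : x₀ + z ∈ S n := hball' (by simpa [dist_eq_norm] using hz)
    have hKle : ∀ w ∈ S n, Kf j w ((2 : ℝ) ^ (-(k : ℝ))) ≤ n * (2 : ℝ) ^ (-(θ * (k : ℝ))) := by
      intro w hw
      have hwk := hw k
      have hinv : (2 : ℝ) ^ (-(θ * (k : ℝ))) = ((2 : ℝ) ^ (θ * (k : ℝ)))⁻¹ := by
        rw [Real.rpow_neg (by norm_num)]
      rw [hinv, ← div_eq_mul_inv, le_div_iff₀ (hep k)]
      nlinarith [hwk]
    have h2 : Kf j z ((2 : ℝ) ^ (-(k : ℝ))) ≤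
        Kf j (x₀ + z) ((2 : ℝ) ^ (-(k : ℝ))) + Kf j (-x₀) ((2 : ℝ) ^ (-(k : ℝ))) := by
      have := Kf_add_le j (x₀ + z) (-x₀) ((2 : ℝ) ^ (-(k : ℝ))) (htp k).le
      simpa [add_comm, add_assoc, add_neg_cancel_comm] using this
    have h3 : Kf j (-x₀) ((2 : ℝ) ^ (-(k : ℝ))) ≤ Kf j x₀ ((2 : ℝ) ^ (-(k : ℝ))) := by
      have := Kf_smul_le j (-1 : ℝ) x₀ ((2 : ℝ) ^ (-(k : ℝ))) (htp k).le
      simpa using this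
    have h4 := hKle _ h1
    have h5 := hKle _ hx₀S
    nlinarith
  -- global homogeneous bound
  set C : ℝ := 4 * (n + 1) / r with hC
  have hCpos : 0 < C := by positivity
  have hglob : ∀ (x : X) (k : ℕ),
      Kf j x ((2 : ℝ) ^ (-(k : ℝ))) ≤ C * (2 : ℝ) ^ (-(θ * (k : ℝ))) * ‖x‖ := by
    intro x k
    rcases eq_or_ne x 0 with rfl | hx
    · have h0 : Kf j (0 : X) ((2 : ℝ) ^ (-(k : ℝ))) ≤ 0 := by
        simpa using Kf_le_norm j (0 : X) _ (htp k).le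
      simp only [norm_zero, mul_zero]
      exact h0
    · have hxn : 0 < ‖x‖ := norm_pos_iff.mpr hx
      set z : X := (r / (2 * ‖x‖)) • x with hz
      have hzn : ‖z‖ = r / 2 := by
        rw [hz, norm_smul, Real.norm_eq_abs, abs_of_pos (by positivity)]
        field_simp
      have hzr : ‖z‖ < r := by rw [hzn]; linarith
      have hxz : x = ((2 * ‖x‖) / r) • z := by
        rw [hz, smul_smul]
        rw [show (2 * ‖x‖) / r * (r / (2 * ‖x‖)) = 1 by field_simp]
        simp
      calc Kf j x ((2 : ℝ) ^ (-(k : ℝ)))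
          = Kf j (((2 * ‖x‖) / r) • z) ((2 : ℝ) ^ (-(k : ℝ))) := by rw [← hxz]
        _ ≤ |(2 * ‖x‖) / r| * Kf j z ((2 : ℝ) ^ (-(k : ℝ))) :=
            Kf_smul_le j _ z _ (htp k).le
        _ = ((2 * ‖x‖) / r) * Kf j z ((2 : ℝ) ^ (-(k : ℝ))) := by
            rw [abs_of_pos (by positivity)]
        _ ≤ ((2 * ‖x‖) / r) * (2 * n * (2 : ℝ) ^ (-(θ * (k : ℝ)))) := by
            have := hzball z hzr k
            gcongr
        _ = (4 * n / r) * (2 : ℝ) ^ (-(θ * (k : ℝ))) * ‖x‖ := by ring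
        _ ≤ C * (2 : ℝ) ^ (-(θ * (k : ℝ))) * ‖x‖ := by
            have h2 : (0:ℝ) < (2 : ℝ) ^ (-(θ * (k : ℝ))) := Real.rpow_pos_of_pos two_pos _
            have h4 : 4 * (n:ℝ) / r ≤ C := by
              rw [hC]; gcongr; linarith
            exact mul_le_mul_of_nonneg_right
              (mul_le_mul_of_nonneg_right h4 h2.le) (norm_nonneg x)
  -- choose k with C * 2^{-θk} ≤ 1/4
  have hsmalltend : Tendsto (fun k : ℕ => C * (2 : ℝ) ^ (-(θ * (k : ℝ)))) atTop (𝓝 0) := by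
    have heq : ∀ k : ℕ, (2 : ℝ) ^ (-(θ * (k : ℝ))) = ((2 : ℝ) ^ (-θ)) ^ k := by
      intro k
      rw [← Real.rpow_natCast ((2:ℝ) ^ (-θ)) k, ← Real.rpow_mul (by norm_num)]
      ring_nf
    have hlt : (2 : ℝ) ^ (-θ) < 1 :=
      Real.rpow_lt_one_of_one_lt_of_neg (by norm_num) (by linarith)
    have h0 : (0:ℝ) ≤ (2 : ℝ) ^ (-θ) := (Real.rpow_pos_of_pos two_pos _).le
    have := (tendsto_pow_atTop_nhds_zero_of_lt_one h0 hlt).const_mul C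
    simpa [heq, mul_zero] using this
  obtain ⟨k, hk⟩ := (hsmalltend.eventually_le_const (by norm_num : (0:ℝ) < 1/4)).exists
  set t : ℝ := (2 : ℝ) ^ (-(k : ℝ)) with hts
  have htpos : 0 < t := htp k
  have hquarter : ∀ x : X, Kf j x t ≤ (1/4) * ‖x‖ := by
    intro x
    calc Kf j x t ≤ C * (2 : ℝ) ^ (-(θ * (k : ℝ))) * ‖x‖ := hglob x k
      _ ≤ (1/4) * ‖x‖ := by
          have := norm_nonneg x
          nlinarith
  -- approximation step
  have happrox : ∀ x : X, ∃ y : Y, ‖x - j y‖ ≤ (1/2) * ‖x‖ ∧ ‖y‖ ≤ (1/t) * ‖x‖ := by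
    intro x
    rcases eq_or_ne x 0 with rfl | hx
    · exact ⟨0, by simp⟩
    · have hxn : 0 < ‖x‖ := norm_pos_iff.mpr hx
      have hlt : Kf j x t < (1/2) * ‖x‖ := lt_of_le_of_lt (hquarter x) (by linarith)
      obtain ⟨y, hy⟩ := exists_lt_of_ciInf_lt
        (show (⨅ y : Y, (‖x - j y‖ + t * ‖y‖)) < (1/2) * ‖x‖ from hlt)
      refine ⟨y, ?_, ?_⟩
      · have := mul_nonneg htpos.le (norm_nonneg y); linarith
      · have h1 : t * ‖y‖ ≤ (1/2) * ‖x‖ := by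
          have := norm_nonneg (x - j y); linarith
        rw [← sub_nonneg]
        have heq : (1/t) * ‖x‖ - ‖y‖ = ((1/2) * ‖x‖ - t * ‖y‖) / t + (1/2) * ‖x‖ / t := by
          field_simp; ring
        rw [heq]
        have hnum : (0:ℝ) ≤ (1/2) * ‖x‖ - t * ‖y‖ := by linarith
        exact add_nonneg (div_nonneg hnum htpos.le) (by positivity)
  -- iteration
  intro x
  choose g hg1 hg2 using happrox
  set u : ℕ → X := fun n => (fun z => z - j (g z))^[n] x with hu
  have hu0 : u 0 = x := rfl
  have husucc : ∀ n, u (n + 1) = u n - j (g (u n)) := by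
    intro n
    rw [hu]
    exact Function.iterate_succ_apply' _ _ _
  have hunorm : ∀ n, ‖u n‖ ≤ (1/2) ^ n * ‖x‖ := by
    intro n
    induction n with
    | zero => simp [hu0]
    | succ n ih =>
        rw [husucc]
        calc ‖u n - j (g (u n))‖ ≤ (1/2) * ‖u n‖ := hg1 (u n)
          _ ≤ (1/2) * ((1/2) ^ n * ‖x‖) := by linarith
          _ = (1/2) ^ (n + 1) * ‖x‖ := by ring
  have hgnorm : ∀ n, ‖g (u n)‖ ≤ ((1/t) * ‖x‖) * (1/2) ^ n := by
    intro n
    calc ‖g (u n)‖ ≤ (1/t) * ‖u n‖ := hg2 (u n)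
      _ ≤ (1/t) * ((1/2) ^ n * ‖x‖) := by
          have h1 : (0:ℝ) < 1/t := by positivity
          have := hunorm n
          nlinarith
      _ = ((1/t) * ‖x‖) * (1/2) ^ n := by ring
  have hsum : Summable fun n => g (u n) :=
    Summable.of_norm_bounded
      ((summable_geometric_of_lt_one (by norm_num) (by norm_num)).mul_left ((1/t) * ‖x‖))
      hgnorm
  have hsum2 : Summable fun n => j (g (u n)) := hsum.map (j : Y →L[ℝ] X) j.continuous
  refine ⟨∑' n, g (u n), ?_⟩
  rw [ContinuousLinearMap.map_tsum j hsum]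
  -- partial sums telescope
  have htel : ∀ N, ∑ n ∈ Finset.range N, j (g (u n)) = x - u N := by
    intro N
    have : ∀ n, j (g (u n)) = u n - u (n + 1) := by
      intro n; rw [husucc]; abel
    calc ∑ n ∈ Finset.range N, j (g (u n)) = ∑ n ∈ Finset.range N, (u n - u (n + 1)) :=
          Finset.sum_congr rfl fun n _ => this n
      _ = u 0 - u N := Finset.sum_range_sub' u N
      _ = x - u N := by rw [hu0]
  have hulim : Tendsto u atTop (𝓝 0) := by
    apply squeeze_zero_norm hunorm
    have := (tendsto_pow_atTop_nhds_zero_of_lt_one (by norm_num : (0:ℝ) ≤ 1/2)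
      (by norm_num)).mul_const ‖x‖
    simpa using this
  have h1 : Tendsto (fun N => ∑ n ∈ Finset.range N, j (g (u n))) atTop
      (𝓝 (∑' n, j (g (u n)))) := hsum2.hasSum.tendsto_sum_nat
  have h2 : Tendsto (fun N => x - u N) atTop (𝓝 (x - 0)) :=
    tendsto_const_nhds.sub hulim
  have h3 : Tendsto (fun N => ∑ n ∈ Finset.range N, j (g (u n))) atTop (𝓝 (x - 0)) := by
    simpa [htel] using h2
  have := tendsto_nhds_unique h1 h3
  rw [this, sub_zero]

end Main

/-- If the continuous injective embedding j : Y → X of Banach spaces is not surjective, then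
for every θ ∈ (0,1) there is x ∈ X with {2^{θk} K(x,2^{-k})} unbounded above; in particular
x ∉ A_{θ,q} for all q ∈ (0,∞], so A_{θ,q} is strictly included in X. -/
theorem not_surjective_implies_interpolation_strict
    {X : Type*} [NormedAddCommGroup X] [NormedSpace ℝ X] [CompleteSpace X]
    {Y : Type*} [NormedAddCommGroup Y] [NormedSpace ℝ Y] [CompleteSpace Y]
    (j : Y →L[ℝ] X) (hinj : Function.Injective j)
    (K : X → ℝ → ℝ)
    (hK : ∀ (x : X) (t : ℝ), K x t = ⨅ y : Y, (‖x - j y‖ + t * ‖y‖))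
    (hns : ¬ Function.Surjective j)
    (θ : ℝ) (hθ : θ ∈ Set.Ioo (0 : ℝ) 1) :
    ∃ x : X,
      ¬ BddAbove
        (Set.range fun k : ℕ => (2 : ℝ) ^ (θ * (k : ℝ)) * K x ((2 : ℝ) ^ (-(k : ℝ)))) ∧
      ∀ q : ENNReal, 0 < q → ¬ MemA K θ q x := by
  have hK' : ∀ x t, K x t = Kf j x t := hK
  have hmain : ∃ x : X, ¬ BddAbove
      (Set.range fun k : ℕ => (2 : ℝ) ^ (θ * (k : ℝ)) * K x ((2 : ℝ) ^ (-(k : ℝ)))) := by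
    by_contra h
    push_neg at h
    refine hns (surj_of_all_bdd j hθ.1 fun x => ?_)
    have := h x
    simp only [hK'] at this
    exact this
  obtain ⟨x, hx⟩ := hmain
  refine ⟨x, hx, ?_⟩
  intro q hq hmem
  rcases hmem with ⟨-, hbdd⟩ | ⟨hne, hsumm⟩
  · exact hx hbdd
  · set p : ℝ := q.toReal with hp
    have hppos : 0 < p := ENNReal.toReal_pos hq.ne' hne
    set a : ℕ → ℝ := fun k => (2 : ℝ) ^ (θ * (k : ℝ)) * K x ((2 : ℝ) ^ (-(k : ℝ))) with ha
    have hann : ∀ k, 0 ≤ a k := by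
      intro k
      apply mul_nonneg (Real.rpow_nonneg (by norm_num) _)
      rw [hK']
      exact Kf_nonneg j _ _ (Real.rpow_pos_of_pos two_pos _).le
    have htend : Tendsto (fun k => a k ^ p) atTop (𝓝 0) := hsumm.tendsto_atTop_zero
    have hid : ∀ k, (a k ^ p) ^ p⁻¹ = a k := by
      intro k
      rw [← Real.rpow_mul (hann k), mul_inv_cancel₀ hppos.ne', Real.rpow_one]
    have hcont : ContinuousAt (fun z : ℝ => z ^ p⁻¹) 0 :=
      Real.continuousAt_rpow_const 0 p⁻¹ (Or.inr (by positivity))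
    have htend2 : Tendsto a atTop (𝓝 0) := by
      have h2 := hcont.tendsto.comp htend
      rw [Real.zero_rpow (inv_ne_zero hppos.ne')] at h2
      have : (fun k => ((a k ^ p) ^ p⁻¹)) = a := funext hid
      rwa [show ((fun z : ℝ => z ^ p⁻¹) ∘ fun k => a k ^ p) = a from funext hid] at h2
    exact hx (htend2.bddAbove_range)
end

section
/- Let θ ∈ (0,1), q ∈ (0,∞), and let N be a natural number. If y ∈ Y satisfies ‖y‖_Y ≤ 1 and ‖j y‖_X ≤ 2^{−N}, then Σ_{k=0}^∞ 2^{θkq}·K(j y, 2^{−k})^q ≤ 2^{(θ−1)qN}·2^{θq}/(2^{θq} − 1) + 2^{(θ−1)q(N+1)}/(1 − 2^{(θ−1)q}). In particular, if (y_n) is a sequence in Y with ‖y_n‖_Y ≤ 1 and ‖j y_n‖_X → 0, then Σ_{k=0}^∞ 2^{θkq}·K(j y_n, 2^{−k})^q → 0 as n → ∞. -/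
open Filter Topology

/-- Quantitative bound: if ‖y‖_Y ≤ 1 and ‖j y‖_X ≤ 2^{-N}, then
Σ_k 2^{θkq} K(j y, 2^{-k})^q ≤ 2^{(θ-1)qN} 2^{θq}/(2^{θq}-1) + 2^{(θ-1)q(N+1)}/(1-2^{(θ-1)q}).
In particular, for a sequence (y_n) of the unit ball of Y with ‖j y_n‖_X → 0, the sums
Σ_k 2^{θkq} K(j y_n, 2^{-k})^q tend to 0. -/
theorem interpolation_norm_bound_and_limit
    {X : Type*} [NormedAddCommGroup X] [NormedSpace ℝ X] [CompleteSpace X]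
    {Y : Type*} [AddCommGroup Y] [Module ℝ Y]
    (NY : Seminorm ℝ Y)
    (j : Y →ₗ[ℝ] X) (M : ℝ) (hM : 0 < M)
    (hj : ∀ y : Y, ‖j y‖ ≤ M * NY y)
    (K : X → ℝ → ℝ)
    (hK : ∀ (x : X) (t : ℝ), K x t = ⨅ y : Y, (‖x - j y‖ + t * NY y))
    (θ q : ℝ) (hθ : θ ∈ Set.Ioo (0 : ℝ) 1) (hq : 0 < q) :
    (∀ (N : ℕ) (y : Y), NY y ≤ 1 → ‖j y‖ ≤ (2 : ℝ) ^ (-(N : ℝ)) →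
      Summable (fun k : ℕ =>
        (2 : ℝ) ^ (θ * (k : ℝ) * q) * K (j y) ((2 : ℝ) ^ (-(k : ℝ))) ^ q) ∧
      (∑' k : ℕ, (2 : ℝ) ^ (θ * (k : ℝ) * q) * K (j y) ((2 : ℝ) ^ (-(k : ℝ))) ^ q) ≤
        (2 : ℝ) ^ ((θ - 1) * q * (N : ℝ)) * (2 : ℝ) ^ (θ * q) / ((2 : ℝ) ^ (θ * q) - 1)
          + (2 : ℝ) ^ ((θ - 1) * q * ((N : ℝ) + 1)) / (1 - (2 : ℝ) ^ ((θ - 1) * q))) ∧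
    (∀ y : ℕ → Y, (∀ n, NY (y n) ≤ 1) →
      Tendsto (fun n => ‖j (y n)‖) atTop (𝓝 0) →
      Tendsto (fun n =>
          ∑' k : ℕ, (2 : ℝ) ^ (θ * (k : ℝ) * q) * K (j (y n)) ((2 : ℝ) ^ (-(k : ℝ))) ^ q)
        atTop (𝓝 0)) := by
  obtain ⟨hθ0, hθ1⟩ := hθ
  have two_pos : (0:ℝ) < 2 := by norm_num
  set r1 : ℝ := (2 : ℝ) ^ (θ * q) with hr1def
  set r2 : ℝ := (2 : ℝ) ^ ((θ - 1) * q) with hr2def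
  have hr1 : 1 < r1 := by
    rw [hr1def, Real.one_lt_rpow_iff_of_pos two_pos]
    exact Or.inl ⟨by norm_num, by positivity⟩
  have hr2pos : 0 < r2 := Real.rpow_pos_of_pos two_pos _
  have hr2 : r2 < 1 :=
    Real.rpow_lt_one_of_one_lt_of_neg (by norm_num)
      (mul_neg_of_neg_of_pos (by linarith) hq)
  -- basic facts about K
  have hbdd : ∀ (x : X) (t : ℝ), 0 ≤ t →
      BddBelow (Set.range fun y' : Y => ‖x - j y'‖ + t * NY y') := by
    intro x t ht
    refine ⟨0, ?_⟩
    rintro _ ⟨y', rfl⟩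
    exact add_nonneg (norm_nonneg _) (mul_nonneg ht (apply_nonneg NY _))
  have hKnonneg : ∀ (x : X) (t : ℝ), 0 ≤ t → 0 ≤ K x t := by
    intro x t ht
    rw [hK]
    exact le_ciInf fun y' =>
      add_nonneg (norm_nonneg _) (mul_nonneg ht (apply_nonneg NY _))
  have hK_le_t : ∀ (y : Y) (t : ℝ), 0 ≤ t → NY y ≤ 1 → K (j y) t ≤ t := by
    intro y t ht hy
    rw [hK]
    refine (ciInf_le (hbdd _ _ ht) y).trans ?_
    simp only [sub_self, norm_zero, zero_add]
    calc t * NY y ≤ t * 1 := mul_le_mul_of_nonneg_left hy ht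
    _ = t := mul_one t
  have hK_le_norm : ∀ (x : X) (t : ℝ), 0 ≤ t → K x t ≤ ‖x‖ := by
    intro x t ht
    rw [hK]
    refine (ciInf_le (hbdd _ _ ht) 0).trans ?_
    simp
  -- main quantitative estimate
  have main : ∀ (N : ℕ) (y : Y), NY y ≤ 1 → ‖j y‖ ≤ (2 : ℝ) ^ (-(N : ℝ)) →
      Summable (fun k : ℕ =>
        (2 : ℝ) ^ (θ * (k : ℝ) * q) * K (j y) ((2 : ℝ) ^ (-(k : ℝ))) ^ q) ∧
      (∑' k : ℕ, (2 : ℝ) ^ (θ * (k : ℝ) * q) * K (j y) ((2 : ℝ) ^ (-(k : ℝ))) ^ q) ≤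
        (2 : ℝ) ^ ((θ - 1) * q * (N : ℝ)) * (2 : ℝ) ^ (θ * q) / ((2 : ℝ) ^ (θ * q) - 1)
          + (2 : ℝ) ^ ((θ - 1) * q * ((N : ℝ) + 1)) / (1 - (2 : ℝ) ^ ((θ - 1) * q)) := by
    intro N y hy1 hy2
    set f : ℕ → ℝ := fun k =>
      (2 : ℝ) ^ (θ * (k : ℝ) * q) * K (j y) ((2 : ℝ) ^ (-(k : ℝ))) ^ q with hfdef
    have htpos : ∀ k : ℕ, (0:ℝ) < (2 : ℝ) ^ (-(k : ℝ)) := fun k =>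
      Real.rpow_pos_of_pos two_pos _
    have hKpos : ∀ k : ℕ, 0 ≤ K (j y) ((2 : ℝ) ^ (-(k : ℝ))) := fun k =>
      hKnonneg _ _ (htpos k).le
    have hf_nonneg : ∀ k, 0 ≤ f k := fun k =>
      mul_nonneg (Real.rpow_pos_of_pos two_pos _).le (Real.rpow_nonneg (hKpos k) q)
    have hf_le2 : ∀ k, f k ≤ r2 ^ k := by
      intro k
      have h1 : K (j y) ((2 : ℝ) ^ (-(k : ℝ))) ≤ (2 : ℝ) ^ (-(k : ℝ)) :=
        hK_le_t y _ (htpos k).le hy1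
      have h2 : K (j y) ((2 : ℝ) ^ (-(k : ℝ))) ^ q ≤ ((2 : ℝ) ^ (-(k : ℝ))) ^ q :=
        Real.rpow_le_rpow (hKpos k) h1 hq.le
      calc f k ≤ (2 : ℝ) ^ (θ * (k : ℝ) * q) * ((2 : ℝ) ^ (-(k : ℝ))) ^ q :=
            mul_le_mul_of_nonneg_left h2 (Real.rpow_pos_of_pos two_pos _).le
        _ = r2 ^ k := by
            rw [hr2def, ← Real.rpow_natCast ((2:ℝ) ^ ((θ-1)*q)) k,
              ← Real.rpow_mul two_pos.le, ← Real.rpow_mul two_pos.le,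
              ← Real.rpow_add two_pos]
            ring_nf
    have hf_le1 : ∀ k, f k ≤ r1 ^ k * ((2 : ℝ) ^ (-(N : ℝ))) ^ q := by
      intro k
      have h1 : K (j y) ((2 : ℝ) ^ (-(k : ℝ))) ≤ (2 : ℝ) ^ (-(N : ℝ)) :=
        (hK_le_norm _ _ (htpos k).le).trans hy2
      have h2 : K (j y) ((2 : ℝ) ^ (-(k : ℝ))) ^ q ≤ ((2 : ℝ) ^ (-(N : ℝ))) ^ q :=
        Real.rpow_le_rpow (hKpos k) h1 hq.le
      calc f k ≤ (2 : ℝ) ^ (θ * (k : ℝ) * q) * ((2 : ℝ) ^ (-(N : ℝ))) ^ q :=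
            mul_le_mul_of_nonneg_left h2 (Real.rpow_pos_of_pos two_pos _).le
        _ = r1 ^ k * ((2 : ℝ) ^ (-(N : ℝ))) ^ q := by
            have hb : (2 : ℝ) ^ (θ * (k : ℝ) * q) = r1 ^ k := by
              rw [hr1def, ← Real.rpow_natCast ((2:ℝ) ^ (θ*q)) k,
                ← Real.rpow_mul two_pos.le]
              congr 1
              ring
            rw [hb]
    have hsum : Summable f :=
      Summable.of_nonneg_of_le hf_nonneg hf_le2 (summable_geometric_of_lt_one hr2pos.le hr2)
    refine ⟨hsum, ?_⟩
    have hsplit := Summable.sum_add_tsum_nat_add (N + 1) hsum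
    rw [← hsplit]
    have hA : ∑ i ∈ Finset.range (N + 1), f i ≤
        (2 : ℝ) ^ ((θ - 1) * q * (N : ℝ)) * (2 : ℝ) ^ (θ * q) / ((2 : ℝ) ^ (θ * q) - 1) := by
      calc ∑ i ∈ Finset.range (N + 1), f i
          ≤ ∑ i ∈ Finset.range (N + 1), r1 ^ i * ((2 : ℝ) ^ (-(N : ℝ))) ^ q :=
            Finset.sum_le_sum fun i _ => hf_le1 i
        _ = ((r1 ^ (N + 1) - 1) / (r1 - 1)) * ((2 : ℝ) ^ (-(N : ℝ))) ^ q := by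
            rw [← Finset.sum_mul, geom_sum_eq hr1.ne' (N + 1)]
        _ ≤ (r1 ^ (N + 1) / (r1 - 1)) * ((2 : ℝ) ^ (-(N : ℝ))) ^ q := by
            apply mul_le_mul_of_nonneg_right _ (Real.rpow_nonneg (htpos N).le q)
            apply div_le_div_of_nonneg_right _ (by linarith)
            linarith
        _ = (2 : ℝ) ^ ((θ - 1) * q * (N : ℝ)) * (2 : ℝ) ^ (θ * q) / ((2 : ℝ) ^ (θ * q) - 1) := by
            rw [div_mul_eq_mul_div, hr1def, ← Real.rpow_natCast ((2:ℝ) ^ (θ*q)) (N+1),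
              ← Real.rpow_mul two_pos.le, ← Real.rpow_mul two_pos.le,
              ← Real.rpow_add two_pos, ← Real.rpow_add two_pos]
            push_cast
            ring_nf
    have hB : (∑' k : ℕ, f (k + (N + 1))) ≤
        (2 : ℝ) ^ ((θ - 1) * q * ((N : ℝ) + 1)) / (1 - (2 : ℝ) ^ ((θ - 1) * q)) := by
      have hsum' : Summable (fun k : ℕ => f (k + (N + 1))) :=
        (summable_nat_add_iff (N + 1)).mpr hsum
      have hsumg : Summable (fun k : ℕ => r2 ^ (N + 1) * r2 ^ k) :=
        (summable_geometric_of_lt_one hr2pos.le hr2).mul_left _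
      calc (∑' k : ℕ, f (k + (N + 1)))
          ≤ ∑' k : ℕ, r2 ^ (N + 1) * r2 ^ k := by
            refine Summable.tsum_le_tsum (fun k => ?_) hsum' hsumg
            calc f (k + (N + 1)) ≤ r2 ^ (k + (N + 1)) := hf_le2 _
              _ = r2 ^ (N + 1) * r2 ^ k := by rw [pow_add]; ring
        _ = r2 ^ (N + 1) * (1 - r2)⁻¹ := by
            rw [tsum_mul_left, tsum_geometric_of_lt_one hr2pos.le hr2]
        _ = (2 : ℝ) ^ ((θ - 1) * q * ((N : ℝ) + 1)) / (1 - (2 : ℝ) ^ ((θ - 1) * q)) := by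
            rw [hr2def, ← Real.rpow_natCast ((2:ℝ) ^ ((θ-1)*q)) (N+1),
              ← Real.rpow_mul two_pos.le, div_eq_mul_inv]
            push_cast
            ring_nf
    exact add_le_add hA hB
  refine ⟨main, ?_⟩
  -- the limit statement
  intro y hy1 hy2
  set S : ℕ → ℝ := fun n =>
    ∑' k : ℕ, (2 : ℝ) ^ (θ * (k : ℝ) * q) * K (j (y n)) ((2 : ℝ) ^ (-(k : ℝ))) ^ q with hSdef
  have hS_nonneg : ∀ n, 0 ≤ S n := by
    intro n
    refine tsum_nonneg fun k => ?_
    exact mul_nonneg (Real.rpow_pos_of_pos two_pos _).le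
      (Real.rpow_nonneg (hKnonneg _ _ (Real.rpow_pos_of_pos two_pos _).le) q)
  -- the bound tends to 0 as N → ∞
  set B : ℕ → ℝ := fun N =>
    (2 : ℝ) ^ ((θ - 1) * q * (N : ℝ)) * (2 : ℝ) ^ (θ * q) / ((2 : ℝ) ^ (θ * q) - 1)
      + (2 : ℝ) ^ ((θ - 1) * q * ((N : ℝ) + 1)) / (1 - (2 : ℝ) ^ ((θ - 1) * q)) with hBdef
  have hBform : ∀ N : ℕ, B N = r2 ^ N * (r1 / (r1 - 1) + r2 / (1 - r2)) := by
    intro N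
    rw [hBdef, hr1def, hr2def]
    simp only
    rw [← Real.rpow_natCast ((2:ℝ) ^ ((θ-1)*q)) N, ← Real.rpow_mul two_pos.le]
    have e1 : (θ - 1) * q * (N : ℝ) = (θ - 1) * q * (N : ℝ) := rfl
    have e2 : (θ - 1) * q * ((N : ℝ) + 1) = (θ - 1) * q * (N : ℝ) + (θ - 1) * q := by ring
    rw [e2, Real.rpow_add two_pos]
    ring
  have hBtend : Tendsto B atTop (𝓝 0) := by
    have : Tendsto (fun N : ℕ => r2 ^ N * (r1 / (r1 - 1) + r2 / (1 - r2))) atTop (𝓝 0) := by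
      simpa using
        (tendsto_pow_atTop_nhds_zero_of_lt_one hr2pos.le hr2).mul_const
          (r1 / (r1 - 1) + r2 / (1 - r2))
    exact Tendsto.congr (fun N => (hBform N).symm) this
  rw [NormedAddCommGroup.tendsto_nhds_zero]
  intro ε hε
  obtain ⟨N, hN⟩ := (Metric.tendsto_atTop.mp hBtend ε hε) |>.imp (fun N h => h N le_rfl)
  have hBN : B N < ε := by
    have := hN
    rwa [Real.dist_eq, sub_zero, abs_of_nonneg] at this
    · rw [hBform]
      have h1 : 0 ≤ r1 / (r1 - 1) := div_nonneg (by linarith) (by linarith)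
      have h2 : 0 ≤ r2 / (1 - r2) := div_nonneg hr2pos.le (by linarith)
      positivity
  have hev : ∀ᶠ n in atTop, ‖j (y n)‖ ≤ (2 : ℝ) ^ (-(N : ℝ)) := by
    have hpos : (0:ℝ) < (2 : ℝ) ^ (-(N : ℝ)) := Real.rpow_pos_of_pos two_pos _
    have := hy2.eventually (eventually_le_nhds hpos)
    simpa using this.mono fun n hn => le_trans (le_abs_self _) (by simpa [abs_norm] using hn)
  refine hev.mono fun n hn => ?_
  have hSB : S n ≤ B N := (main N (y n) (hy1 n) hn).2
  rw [Real.norm_eq_abs, abs_of_nonneg (hS_nonneg n)]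
  exact lt_of_le_of_lt hSB hBN
end

section
/- Assume that the range of j is not closed in X. Then for every θ ∈ (0,1) and every q ∈ (0,∞] there exists x ∈ X such that x belongs to A_{θ,q} but x is not in the range of j; that is, the inclusion of (the image under j of) Y into A_{θ,q} is strict. -/
open Filter Topology

section
variable {X : Type*} [NormedAddCommGroup X] [NormedSpace ℝ X]
variable {Y : Type*} [NormedAddCommGroup Y] [NormedSpace ℝ Y]

noncomputable def KK (j : Y →L[ℝ] X) (x : X) (t : ℝ) : ℝ :=
  ⨅ y : Y, (‖x - j y‖ + t * ‖y‖)

variable (j : Y →L[ℝ] X)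

lemma KK_bddBelow (x : X) {t : ℝ} (ht : 0 ≤ t) :
    BddBelow (Set.range fun y : Y => ‖x - j y‖ + t * ‖y‖) :=
  ⟨0, by rintro _ ⟨y, rfl⟩; positivity⟩

lemma KK_nonneg (x : X) {t : ℝ} (ht : 0 ≤ t) : 0 ≤ KK j x t :=
  Real.iInf_nonneg fun y => by positivity

lemma KK_le (x : X) {t : ℝ} (ht : 0 ≤ t) (y : Y) : KK j x t ≤ ‖x - j y‖ + t * ‖y‖ :=
  ciInf_le (KK_bddBelow j x ht) y

lemma KK_le_norm (x : X) {t : ℝ} (ht : 0 ≤ t) : KK j x t ≤ ‖x‖ := by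
  simpa using KK_le j x ht 0

lemma KK_exists (x : X) (t : ℝ) {ε : ℝ} (hε : 0 < ε) :
    ∃ y : Y, ‖x - j y‖ + t * ‖y‖ < KK j x t + ε := by
  have h : KK j x t < KK j x t + ε := by linarith
  obtain ⟨y, hy⟩ := exists_lt_of_ciInf_lt h
  exact ⟨y, hy⟩

lemma KK_add_le (x x' : X) {t : ℝ} (ht : 0 ≤ t) :
    KK j (x + x') t ≤ KK j x t + KK j x' t := by
  refine le_of_forall_pos_le_add fun ε hε => ?_
  obtain ⟨y, hy⟩ := KK_exists j x t (half_pos hε)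
  obtain ⟨y', hy'⟩ := KK_exists j x' t (half_pos hε)
  have h := KK_le j (x + x') ht (y + y')
  have h2 : ‖x + x' - j (y + y')‖ ≤ ‖x - j y‖ + ‖x' - j y'‖ := by
    rw [map_add]
    calc ‖x + x' - (j y + j y')‖ = ‖(x - j y) + (x' - j y')‖ := by abel_nf
      _ ≤ _ := norm_add_le _ _
  have h3 : t * ‖y + y'‖ ≤ t * ‖y‖ + t * ‖y'‖ := by
    rw [← mul_add]; exact mul_le_mul_of_nonneg_left (norm_add_le _ _) ht
  linarith

lemma KK_neg (x : X) {t : ℝ} (ht : 0 ≤ t) : KK j (-x) t = KK j x t := by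
  have key : ∀ z : X, KK j (-z) t ≤ KK j z t := by
    intro z
    refine le_ciInf fun y => ?_
    have := KK_le j (-z) ht (-y)
    have e : -z - j (-y) = -(z - j y) := by simp [sub_eq_add_neg]; abel
    rw [e, norm_neg, norm_neg] at this
    exact this
  have h1 := key x
  have h2 := key (-x)
  rw [neg_neg] at h2
  exact le_antisymm h1 h2

lemma KK_smul_le (c : ℝ) (x : X) {t : ℝ} (ht : 0 ≤ t) :
    KK j (c • x) t ≤ |c| * KK j x t := by
  rcases eq_or_ne c 0 with rfl | hc
  · simpa using KK_le_norm j (0 : X) ht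
  · refine le_of_forall_pos_le_add fun ε hε => ?_
    have hc' : 0 < |c| := abs_pos.mpr hc
    obtain ⟨y, hy⟩ := KK_exists j x t (div_pos hε hc')
    have h := KK_le j (c • x) ht (c • y)
    have h2 : ‖c • x - j (c • y)‖ = |c| * ‖x - j y‖ := by
      rw [map_smul, ← smul_sub, norm_smul, Real.norm_eq_abs]
    have h3 : t * ‖c • y‖ = |c| * (t * ‖y‖) := by
      rw [norm_smul, Real.norm_eq_abs]; ring
    rw [h2, h3] at h
    have := mul_le_mul_of_nonneg_left hy.le hc'.le
    have e : |c| * (KK j x t + ε / |c|) = |c| * KK j x t + ε := by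
      field_simp
    rw [e] at this
    rw [← mul_add] at h
    linarith

lemma KK_lipschitz (x x' : X) {t : ℝ} (ht : 0 ≤ t) :
    KK j x t ≤ KK j x' t + ‖x - x'‖ := by
  have h := KK_add_le j x' (x - x') ht
  rw [add_sub_cancel] at h
  exact h.trans (by have := KK_le_norm j (x - x') ht; linarith)

lemma KK_j_le (y : Y) {t : ℝ} (ht : 0 ≤ t) : KK j (j y) t ≤ t * ‖y‖ := by
  simpa using KK_le j (j y) ht y

/-- The `k`-th term `2^{βk} K(x, 2^{-k})`. -/
noncomputable def trm (j : Y →L[ℝ] X) (β : ℝ) (x : X) (k : ℕ) : ℝ :=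
  (2 : ℝ) ^ (β * (k : ℝ)) * KK j x ((2 : ℝ) ^ (-(k : ℝ)))

lemma tpos (k : ℕ) : (0:ℝ) < (2 : ℝ) ^ (-(k : ℝ)) := Real.rpow_pos_of_pos two_pos _

lemma trm_nonneg (β : ℝ) (x : X) (k : ℕ) : 0 ≤ trm j β x k :=
  mul_nonneg (Real.rpow_pos_of_pos two_pos _).le (KK_nonneg j x (tpos k).le)

lemma trm_add_le (β : ℝ) (x x' : X) (k : ℕ) :
    trm j β (x + x') k ≤ trm j β x k + trm j β x' k := by
  unfold trm
  rw [← mul_add]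
  exact mul_le_mul_of_nonneg_left (KK_add_le j x x' (tpos k).le)
    (Real.rpow_pos_of_pos two_pos _).le

lemma trm_smul_le (β : ℝ) (c : ℝ) (x : X) (k : ℕ) :
    trm j β (c • x) k ≤ |c| * trm j β x k := by
  unfold trm
  calc (2:ℝ) ^ (β * (k:ℝ)) * KK j (c • x) ((2:ℝ) ^ (-(k:ℝ)))
      ≤ (2:ℝ) ^ (β * (k:ℝ)) * (|c| * KK j x ((2:ℝ) ^ (-(k:ℝ)))) :=
        mul_le_mul_of_nonneg_left (KK_smul_le j c x (tpos k).le)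
          (Real.rpow_pos_of_pos two_pos _).le
    _ = |c| * ((2:ℝ) ^ (β * (k:ℝ)) * KK j x ((2:ℝ) ^ (-(k:ℝ)))) := by ring

lemma trm_neg (β : ℝ) (x : X) (k : ℕ) : trm j β (-x) k = trm j β x k := by
  unfold trm; rw [KK_neg j x (tpos k).le]

lemma trm_zero (β : ℝ) (k : ℕ) : trm j β (0 : X) k = 0 := by
  have h1 : KK j (0 : X) ((2:ℝ) ^ (-(k:ℝ))) ≤ 0 := by
    simpa using KK_le_norm j (0 : X) (tpos k).le
  have h2 := KK_nonneg j (0 : X) (tpos k).le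
  unfold trm
  rw [le_antisymm h1 h2]
  ring

lemma trm_lipschitz (β : ℝ) (x x' : X) (k : ℕ) :
    trm j β x k ≤ trm j β x' k + (2:ℝ) ^ (β * (k:ℝ)) * ‖x - x'‖ := by
  unfold trm
  rw [← mul_add]
  exact mul_le_mul_of_nonneg_left (KK_lipschitz j x x' (tpos k).le)
    (Real.rpow_pos_of_pos two_pos _).le

/-- The submodule of `X` on which the `A_β`-norm is finite. -/
noncomputable def Asub (j : Y →L[ℝ] X) (β : ℝ) : Submodule ℝ X where
  carrier := {x | BddAbove (Set.range (trm j β x))}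
  zero_mem' := ⟨0, by rintro _ ⟨k, rfl⟩; exact (trm_zero j β k).le⟩
  add_mem' := by
    rintro x x' ⟨C, hC⟩ ⟨C', hC'⟩
    refine ⟨C + C', ?_⟩
    rintro _ ⟨k, rfl⟩
    exact (trm_add_le j β x x' k).trans
      (add_le_add (hC ⟨k, rfl⟩) (hC' ⟨k, rfl⟩))
  smul_mem' := by
    rintro c x ⟨C, hC⟩
    refine ⟨|c| * C, ?_⟩
    rintro _ ⟨k, rfl⟩
    exact (trm_smul_le j β c x k).trans
      (mul_le_mul_of_nonneg_left (hC ⟨k, rfl⟩) (abs_nonneg c))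

/-- The interpolation-type space `A_β` as a type. -/
def Aspace (j : Y →L[ℝ] X) (β : ℝ) : Type _ := ↥(Asub j β)

namespace Aspace

variable {β : ℝ}

noncomputable instance : AddCommGroup (Aspace j β) :=
  inferInstanceAs (AddCommGroup ↥(Asub j β))

noncomputable instance : Module ℝ (Aspace j β) :=
  inferInstanceAs (Module ℝ ↥(Asub j β))

variable {j}

/-- The underlying element of `X`. -/
def val (x : Aspace j β) : X := Subtype.val x

lemma val_mem (x : Aspace j β) : BddAbove (Set.range (trm j β x.val)) := x.2

@[simp] lemma val_add (x z : Aspace j β) : (x + z).val = x.val + z.val := rfl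
@[simp] lemma val_sub (x z : Aspace j β) : (x - z).val = x.val - z.val := rfl
@[simp] lemma val_neg (x : Aspace j β) : (-x).val = -x.val := rfl
@[simp] lemma val_zero : (0 : Aspace j β).val = 0 := rfl
@[simp] lemma val_smul (c : ℝ) (x : Aspace j β) : (c • x).val = c • x.val := rfl

lemma val_injective : Function.Injective (val : Aspace j β → X) :=
  fun _ _ h => Subtype.ext h

/-- The sup part of the norm. -/
noncomputable def S (x : Aspace j β) : ℝ := sSup (Set.range (trm j β x.val))

lemma le_S (x : Aspace j β) (k : ℕ) : trm j β x.val k ≤ S x :=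
  le_csSup x.val_mem ⟨k, rfl⟩

lemma S_le {x : Aspace j β} {c : ℝ} (h : ∀ k, trm j β x.val k ≤ c) : S x ≤ c :=
  csSup_le (Set.range_nonempty _) (by rintro _ ⟨k, rfl⟩; exact h k)

lemma S_nonneg (x : Aspace j β) : 0 ≤ S x :=
  (trm_nonneg j β x.val 0).trans (le_S x 0)

noncomputable instance : Norm (Aspace j β) := ⟨fun x => ‖x.val‖ + S x⟩

lemma norm_def (x : Aspace j β) : ‖x‖ = ‖x.val‖ + S x := rfl

lemma val_norm_le (x : Aspace j β) : ‖x.val‖ ≤ ‖x‖ := by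
  rw [norm_def]; linarith [S_nonneg x]

lemma S_le_norm (x : Aspace j β) : S x ≤ ‖x‖ := by
  rw [norm_def]; linarith [norm_nonneg x.val]

noncomputable instance : NormedAddCommGroup (Aspace j β) :=
  AddGroupNorm.toNormedAddCommGroup
    { toFun := fun x => ‖x.val‖ + S x
      map_zero' := by
        simp only [val_zero, norm_zero]
        have : S (0 : Aspace j β) = 0 := by
          refine le_antisymm (S_le fun k => ?_) (S_nonneg _)
          simp [trm_zero]
        rw [this]; ring
      add_le' := by
        intro x z
        have h1 : ‖(x + z).val‖ ≤ ‖x.val‖ + ‖z.val‖ := by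
          rw [val_add]; exact norm_add_le _ _
        have h2 : S (x + z) ≤ S x + S z := by
          refine S_le fun k => ?_
          rw [val_add]
          exact (trm_add_le j β x.val z.val k).trans (add_le_add (le_S x k) (le_S z k))
        linarith
      neg' := by
        intro x
        have h1 : ‖(-x).val‖ = ‖x.val‖ := by rw [val_neg, norm_neg]
        have h2 : S (-x) = S x := by
          unfold S
          rw [val_neg]
          congr 1
          ext r
          constructor
          · rintro ⟨k, rfl⟩; exact ⟨k, (trm_neg j β x.val k).symm⟩
          · rintro ⟨k, rfl⟩; exact ⟨k, trm_neg j β x.val k⟩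
        rw [h1, h2]
      eq_zero_of_map_eq_zero' := by
        intro x hx
        have h1 : 0 ≤ ‖x.val‖ := norm_nonneg _
        have h2 := S_nonneg x
        have : ‖x.val‖ = 0 := by linarith
        exact val_injective (by simpa using this) }

noncomputable instance : NormedSpace ℝ (Aspace j β) where
  norm_smul_le := by
    intro c x
    have h1 : ‖(c • x).val‖ = ‖c‖ * ‖x.val‖ := by rw [val_smul, norm_smul]
    have h2 : S (c • x) ≤ ‖c‖ * S x := by
      refine S_le fun k => ?_
      rw [val_smul]
      exact (trm_smul_le j β c x.val k).trans
        (mul_le_mul_of_nonneg_left (le_S x k) (abs_nonneg c))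
    rw [Real.norm_eq_abs] at h1 h2
    rw [norm_def, norm_def, h1, mul_add, Real.norm_eq_abs]
    linarith

lemma lipschitz_val : LipschitzWith 1 (val : Aspace j β → X) := by
  refine LipschitzWith.of_dist_le_mul fun x z => ?_
  simp only [dist_eq_norm, NNReal.coe_one, one_mul, ← val_sub]
  exact val_norm_le (x - z)

noncomputable instance [CompleteSpace X] : CompleteSpace (Aspace j β) := by
  apply Metric.complete_of_cauchySeq_tendsto
  intro u hu
  have hX : CauchySeq (fun n => (u n).val) :=
    (lipschitz_val.uniformContinuous.comp_cauchySeq hu)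
  obtain ⟨xl, hx⟩ := cauchySeq_tendsto_of_complete hX
  obtain ⟨R, -, hR⟩ := cauchySeq_bdd hu
  set B : ℝ := R + ‖u 0‖ with hB
  have hub : ∀ n, ‖u n‖ ≤ B := by
    intro n
    have h1 : dist (u n) (u 0) < R := hR n 0
    have h2 : ‖u n‖ ≤ ‖u n - u 0‖ + ‖u 0‖ := by
      calc ‖u n‖ = ‖(u n - u 0) + u 0‖ := by rw [sub_add_cancel]
        _ ≤ _ := norm_add_le _ _
    rw [dist_eq_norm] at h1
    linarith
  have hmem : xl ∈ Asub j β := by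
    refine ⟨B, ?_⟩
    rintro _ ⟨k, rfl⟩
    set P : ℝ := (2:ℝ) ^ (β * (k:ℝ)) with hP
    have hPpos : 0 < P := Real.rpow_pos_of_pos two_pos _
    refine le_of_forall_pos_le_add fun ε hε => ?_
    have : ∀ᶠ n in atTop, dist ((u n).val) xl < ε / P :=
      (Metric.tendsto_atTop.mp hx (ε / P) (div_pos hε hPpos) : _) |> fun ⟨N, hN⟩ =>
        eventually_atTop.mpr ⟨N, hN⟩
    obtain ⟨n, hn⟩ := this.exists
    rw [dist_eq_norm] at hn
    have h1 : trm j β xl k ≤ trm j β ((u n).val) k + P * ‖xl - (u n).val‖ :=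
      trm_lipschitz j β _ _ k
    have h2 : trm j β ((u n).val) k ≤ ‖u n‖ := (le_S (u n) k).trans (S_le_norm _)
    have h3 : ‖xl - (u n).val‖ = ‖(u n).val - xl‖ := norm_sub_rev _ _
    have h4 : P * ‖(u n).val - xl‖ ≤ P * (ε / P) :=
      mul_le_mul_of_nonneg_left hn.le hPpos.le
    rw [mul_div_cancel₀ _ hPpos.ne'] at h4
    have := hub n
    calc trm j β xl k ≤ ‖u n‖ + P * ‖(u n).val - xl‖ := by rw [h3] at h1; linarith
      _ ≤ B + ε := by linarith
  set xA : Aspace j β := ⟨xl, hmem⟩ with hxA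
  refine ⟨xA, Metric.tendsto_atTop.mpr fun ε hε => ?_⟩
  obtain ⟨N, hN⟩ := Metric.cauchySeq_iff.mp hu (ε / 4) (by linarith)
  refine ⟨N, fun n hn => ?_⟩
  have key : ∀ m, N ≤ m → ‖u n - u m‖ ≤ ε / 4 := by
    intro m hm
    have := hN n hn m hm
    rw [dist_eq_norm] at this
    exact this.le
  have part1 : ‖(u n).val - xl‖ ≤ ε / 4 := by
    have hcont : Tendsto (fun m => ‖(u n).val - (u m).val‖) atTop (𝓝 ‖(u n).val - xl‖) :=
      ((continuous_const.sub continuous_id).norm.continuousAt.tendsto.comp hx : _)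
    refine le_of_tendsto hcont (eventually_atTop.mpr ⟨N, fun m hm => ?_⟩)
    have h := key m hm
    calc ‖(u n).val - (u m).val‖ = ‖(u n - u m).val‖ := by rw [val_sub]
      _ ≤ ‖u n - u m‖ := val_norm_le _
      _ ≤ ε / 4 := h
  have part2 : S (u n - xA) ≤ ε / 4 := by
    refine S_le fun k => ?_
    set P : ℝ := (2:ℝ) ^ (β * (k:ℝ)) with hP
    have hPpos : 0 < P := Real.rpow_pos_of_pos two_pos _
    refine le_of_forall_pos_le_add fun δ hδ => ?_
    obtain ⟨M, hM⟩ := Metric.tendsto_atTop.mp hx (δ / P) (div_pos hδ hPpos)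
    set m : ℕ := max N M with hm
    have hmN : N ≤ m := le_max_left _ _
    have hmM : M ≤ m := le_max_right _ _
    have hdm : ‖(u m).val - xl‖ < δ / P := by
      have := hM m hmM; rw [dist_eq_norm] at this; exact this
    have h1 : trm j β ((u n - xA).val) k ≤
        trm j β ((u n - u m).val) k + P * ‖(u n - xA).val - (u n - u m).val‖ :=
      trm_lipschitz j β _ _ k
    have he : (u n - xA).val - (u n - u m).val = (u m).val - xl := by
      simp only [val_sub]
      show (u n).val - xl - ((u n).val - (u m).val) = (u m).val - xl
      abel
    rw [he] at h1
    have h2 : trm j β ((u n - u m).val) k ≤ ε / 4 :=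
      (le_S (u n - u m) k).trans ((S_le_norm _).trans (key m hmN))
    have h4 : P * ‖(u m).val - xl‖ ≤ P * (δ / P) :=
      mul_le_mul_of_nonneg_left hdm.le hPpos.le
    rw [mul_div_cancel₀ _ hPpos.ne'] at h4
    linarith
  have : dist (u n) xA = ‖(u n - xA).val‖ + S (u n - xA) := by
    rw [dist_eq_norm]; rfl
  rw [this]
  have : ‖(u n - xA).val‖ = ‖(u n).val - xl‖ := rfl
  rw [this]
  linarith

end Aspace

lemma min_le_rpow_mul {u v β : ℝ} (hu : 0 ≤ u) (hv : 0 ≤ v) (hβ0 : 0 ≤ β) (hβ1 : β ≤ 1) :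
    min u v ≤ u ^ (1 - β) * v ^ β := by
  rcases eq_or_lt_of_le hu with rfl | hu'
  · rw [min_eq_left hv]
    positivity
  rcases eq_or_lt_of_le hv with rfl | hv'
  · rw [min_eq_right hu]
    positivity
  rcases le_total u v with h | h
  · calc min u v = u ^ (1 - β) * u ^ β := by
          rw [min_eq_left h, ← Real.rpow_add hu', show (1:ℝ) - β + β = 1 by ring,
            Real.rpow_one]
      _ ≤ u ^ (1 - β) * v ^ β :=
          mul_le_mul_of_nonneg_left (Real.rpow_le_rpow hu h hβ0) (Real.rpow_nonneg hu _)
  · calc min u v = v ^ (1 - β) * v ^ β := by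
          rw [min_eq_right h, ← Real.rpow_add hv', show (1:ℝ) - β + β = 1 by ring,
            Real.rpow_one]
      _ ≤ u ^ (1 - β) * v ^ β :=
          mul_le_mul_of_nonneg_right (Real.rpow_le_rpow hv h (by linarith))
            (Real.rpow_nonneg hv _)

lemma trm_j_le {β : ℝ} (hβ1 : β ≤ 1) (y : Y) (k : ℕ) : trm j β (j y) k ≤ ‖y‖ := by
  have h1 : KK j (j y) ((2:ℝ) ^ (-(k:ℝ))) ≤ (2:ℝ) ^ (-(k:ℝ)) * ‖y‖ := KK_j_le j y (tpos k).le
  have h2 : trm j β (j y) k ≤ (2:ℝ) ^ (β * (k:ℝ)) * ((2:ℝ) ^ (-(k:ℝ)) * ‖y‖) :=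
    mul_le_mul_of_nonneg_left h1 (Real.rpow_pos_of_pos two_pos _).le
  have h3 : (2:ℝ) ^ (β * (k:ℝ)) * ((2:ℝ) ^ (-(k:ℝ)) * ‖y‖)
      = (2:ℝ) ^ ((β - 1) * (k:ℝ)) * ‖y‖ := by
    rw [← mul_assoc, ← Real.rpow_add two_pos]
    ring_nf
  have h4 : (2:ℝ) ^ ((β - 1) * (k:ℝ)) ≤ 1 :=
    Real.rpow_le_one_of_one_le_of_nonpos one_le_two
      (mul_nonpos_of_nonpos_of_nonneg (by linarith) (Nat.cast_nonneg k))
  calc trm j β (j y) k ≤ (2:ℝ) ^ ((β - 1) * (k:ℝ)) * ‖y‖ := by rw [← h3]; exact h2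
    _ ≤ 1 * ‖y‖ := mul_le_mul_of_nonneg_right h4 (norm_nonneg y)
    _ = ‖y‖ := one_mul _

lemma mem_Asub_j {β : ℝ} (hβ1 : β ≤ 1) (y : Y) : j y ∈ Asub j β :=
  ⟨‖y‖, by rintro _ ⟨k, rfl⟩; exact trm_j_le j hβ1 y k⟩

lemma trm_j_le' {β : ℝ} (hβ0 : 0 ≤ β) (hβ1 : β ≤ 1) (y : Y) (k : ℕ) :
    trm j β (j y) k ≤ ‖j y‖ ^ (1 - β) * ‖y‖ ^ β := by
  have hmin : KK j (j y) ((2:ℝ) ^ (-(k:ℝ))) ≤ min ‖j y‖ ((2:ℝ) ^ (-(k:ℝ)) * ‖y‖) :=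
    le_min (KK_le_norm j _ (tpos k).le) (KK_j_le j y (tpos k).le)
  have h2 : min ‖j y‖ ((2:ℝ) ^ (-(k:ℝ)) * ‖y‖)
      ≤ ‖j y‖ ^ (1 - β) * ((2:ℝ) ^ (-(k:ℝ)) * ‖y‖) ^ β :=
    min_le_rpow_mul (norm_nonneg _) (by positivity) hβ0 hβ1
  have h3 : (2:ℝ) ^ (β * (k:ℝ)) * (‖j y‖ ^ (1 - β) * ((2:ℝ) ^ (-(k:ℝ)) * ‖y‖) ^ β)
      = ‖j y‖ ^ (1 - β) * ‖y‖ ^ β := by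
    rw [Real.mul_rpow (tpos k).le (norm_nonneg y),
      ← Real.rpow_mul two_pos.le (-(k:ℝ)) β]
    rw [show ((2:ℝ) ^ (β * (k:ℝ)) * (‖j y‖ ^ (1 - β) * ((2:ℝ) ^ (-(k:ℝ) * β) * ‖y‖ ^ β)))
        = ((2:ℝ) ^ (β * (k:ℝ)) * (2:ℝ) ^ (-(k:ℝ) * β)) * (‖j y‖ ^ (1 - β) * ‖y‖ ^ β) by ring]
    rw [← Real.rpow_add two_pos]
    rw [show β * (k:ℝ) + -(k:ℝ) * β = 0 by ring, Real.rpow_zero, one_mul]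
  calc trm j β (j y) k
      ≤ (2:ℝ) ^ (β * (k:ℝ)) * (‖j y‖ ^ (1 - β) * ((2:ℝ) ^ (-(k:ℝ)) * ‖y‖) ^ β) :=
        mul_le_mul_of_nonneg_left (hmin.trans h2) (Real.rpow_pos_of_pos two_pos _).le
    _ = _ := h3

open Aspace in
lemma isClosed_range_of_Asub_subset [CompleteSpace X] [CompleteSpace Y]
    (hinj : Function.Injective j) {β : ℝ} (hβ0 : 0 < β) (hβ1 : β < 1)
    (hsub : ∀ x : X, x ∈ Asub j β → x ∈ Set.range (j : Y → X)) :
    IsClosed (Set.range (j : Y → X)) := by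
  have hch : ∀ x : Aspace j β, ∃ y : Y, j y = Aspace.val x := fun x => hsub _ x.2
  set ι0 : Aspace j β → Y := fun x => (hch x).choose with hι0def
  have hι0 : ∀ x, j (ι0 x) = x.val := fun x => (hch x).choose_spec
  have map_add : ∀ x z : Aspace j β, ι0 (x + z) = ι0 x + ι0 z := by
    intro x z
    apply hinj
    rw [map_add, hι0, hι0, hι0, val_add]
  have map_smul : ∀ (c : ℝ) (x : Aspace j β), ι0 (c • x) = c • ι0 x := by
    intro c x
    apply hinj
    rw [map_smul, hι0, hι0, val_smul]
  set ι : Aspace j β →ₗ[ℝ] Y :=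
    { toFun := ι0, map_add' := map_add, map_smul' := map_smul } with hιdef
  have hcont : Continuous ι := by
    apply ι.continuous_of_seq_closed_graph
    intro u x y hu hy
    apply hinj
    have h1 : Tendsto (fun n => (u n).val) atTop (𝓝 x.val) :=
      (lipschitz_val.continuous.tendsto x).comp hu
    have h2 : Tendsto (fun n => j (ι (u n))) atTop (𝓝 (j y)) :=
      (j.continuous.tendsto y).comp hy
    have h3 : (fun n => j (ι (u n))) = fun n => (u n).val := by
      funext n; exact hι0 (u n)
    rw [h3] at h2
    have := tendsto_nhds_unique h2 h1
    rw [show j (ι x) = x.val from hι0 x]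
    exact this
  set g : Aspace j β →L[ℝ] Y := ⟨ι, hcont⟩ with hg
  set D : ℝ := ‖g‖ + 1 with hD
  have hD1 : 1 ≤ D := by
    have := norm_nonneg g
    rw [hD]; linarith
  have hDpos : 0 < D := lt_of_lt_of_le one_pos hD1
  have hbound : ∀ x : Aspace j β, ‖ι x‖ ≤ D * ‖x‖ := by
    intro x
    calc ‖ι x‖ = ‖g x‖ := rfl
      _ ≤ ‖g‖ * ‖x‖ := g.le_opNorm x
      _ ≤ D * ‖x‖ := mul_le_mul_of_nonneg_right (by rw [hD]; linarith) (norm_nonneg x)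
  set L : ℝ := max (2 * D) ((2 * D) ^ ((1 - β)⁻¹)) with hL
  have hLpos : 0 < L := lt_of_lt_of_le (by linarith) (le_max_left _ _)
  have hkey : ∀ y : Y, ‖y‖ ≤ L * ‖j y‖ := by
    intro y
    rcases eq_or_ne y 0 with rfl | hy0
    · simp
    have hb : (0:ℝ) < ‖y‖ := norm_pos_iff.mpr hy0
    have hjy0 : j y ≠ 0 := fun h => hy0 (hinj (by rw [h, map_zero]))
    have ha : (0:ℝ) < ‖j y‖ := norm_pos_iff.mpr hjy0
    set a : ℝ := ‖j y‖
    set b : ℝ := ‖y‖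
    set xA : Aspace j β := ⟨j y, mem_Asub_j j hβ1.le y⟩ with hxA
    have hιxA : ι xA = y := hinj (hι0 xA)
    have hnormxA : ‖xA‖ ≤ a + a ^ (1 - β) * b ^ β := by
      rw [Aspace.norm_def]
      have : Aspace.S xA ≤ a ^ (1 - β) * b ^ β :=
        Aspace.S_le fun k => trm_j_le' j hβ0.le hβ1.le y k
      have hv : ‖xA.val‖ = a := rfl
      rw [hv]
      linarith
    have hstep : b ≤ D * a + D * (a ^ (1 - β) * b ^ β) := by
      have h1 := hbound xA
      rw [hιxA] at h1
      have h2 : D * ‖xA‖ ≤ D * (a + a ^ (1 - β) * b ^ β) :=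
        mul_le_mul_of_nonneg_left hnormxA hDpos.le
      calc b ≤ D * ‖xA‖ := h1
        _ ≤ D * (a + a ^ (1 - β) * b ^ β) := h2
        _ = D * a + D * (a ^ (1 - β) * b ^ β) := by ring
    rcases le_or_gt b (2 * D * a) with hcase | hcase
    · calc b ≤ 2 * D * a := hcase
        _ ≤ L * a := mul_le_mul_of_nonneg_right (le_max_left _ _) ha.le
    · have h2Da : D * a < b / 2 := by nlinarith
      have hb2 : b ≤ 2 * D * (a ^ (1 - β) * b ^ β) := by linarith
      have hβ' : (0:ℝ) < 1 - β := by linarith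
      have hbβ : (0:ℝ) < b ^ β := Real.rpow_pos_of_pos hb _
      have hsplit : b ^ (1 - β) * b ^ β = b := by
        rw [← Real.rpow_add hb, show (1:ℝ) - β + β = 1 by ring, Real.rpow_one]
      set M : ℝ := 2 * D * a ^ (1 - β) with hM
      have hMpos : 0 < M := by
        have := Real.rpow_pos_of_pos ha (1 - β)
        positivity
      have h1 : b ^ (1 - β) ≤ M := by
        have h3 : b ^ (1 - β) * b ^ β ≤ M * b ^ β := by
          rw [hsplit]
          calc b ≤ 2 * D * (a ^ (1 - β) * b ^ β) := hb2
            _ = M * b ^ β := by rw [hM]; ring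
        exact le_of_mul_le_mul_right h3 hbβ
      have h4 : (b ^ (1 - β)) ^ ((1 - β)⁻¹) ≤ M ^ ((1 - β)⁻¹) :=
        Real.rpow_le_rpow (Real.rpow_nonneg hb.le _) h1 (inv_nonneg.mpr hβ'.le)
      have h5 : (b ^ (1 - β)) ^ ((1 - β)⁻¹) = b := by
        rw [← Real.rpow_mul hb.le, mul_inv_cancel₀ hβ'.ne', Real.rpow_one]
      have h6 : M ^ ((1 - β)⁻¹) = (2 * D) ^ ((1 - β)⁻¹) * a := by
        rw [hM, Real.mul_rpow (by linarith) (Real.rpow_nonneg ha.le _),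
          ← Real.rpow_mul ha.le, mul_inv_cancel₀ hβ'.ne', Real.rpow_one]
      rw [h5, h6] at h4
      calc b ≤ (2 * D) ^ ((1 - β)⁻¹) * a := h4
        _ ≤ L * a := mul_le_mul_of_nonneg_right (le_max_right _ _) ha.le
  have hanti : AntilipschitzWith L.toNNReal (j : Y → X) :=
    ContinuousLinearMap.antilipschitz_of_bound j fun y => by
      rw [Real.coe_toNNReal L hLpos.le]; exact hkey y
  exact hanti.isClosed_range j.uniformContinuous

lemma memA_of_mem_Asub {θ β : ℝ} (hθβ : θ < β) {x : X}
    (hx : x ∈ Asub j β) (q : ENNReal) (hq : 0 < q) : MemA (KK j) θ q x := by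
  obtain ⟨C, hC⟩ := hx
  have hC' : ∀ k : ℕ, trm j β x k ≤ C := fun k => hC ⟨k, rfl⟩
  set r : ℝ := (2:ℝ) ^ (θ - β) with hr
  have hr0 : 0 < r := Real.rpow_pos_of_pos two_pos _
  have hr1 : r < 1 :=
    Real.rpow_lt_one_of_one_lt_of_neg one_lt_two (by linarith)
  have hbd : ∀ k : ℕ,
      (2:ℝ) ^ (θ * (k:ℝ)) * KK j x ((2:ℝ) ^ (-(k:ℝ))) ≤ (C + 1) * r ^ k := by
    intro k
    have e1 : (2:ℝ) ^ (θ * (k:ℝ))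
        = (2:ℝ) ^ ((θ - β) * (k:ℝ)) * (2:ℝ) ^ (β * (k:ℝ)) := by
      rw [← Real.rpow_add two_pos]; ring_nf
    have e2 : (2:ℝ) ^ ((θ - β) * (k:ℝ)) = r ^ k := by
      rw [hr, ← Real.rpow_natCast ((2:ℝ) ^ (θ - β)) k, ← Real.rpow_mul two_pos.le]
    have h3 : (2:ℝ) ^ ((θ - β) * (k:ℝ)) * trm j β x k
        ≤ (2:ℝ) ^ ((θ - β) * (k:ℝ)) * (C + 1) :=
      mul_le_mul_of_nonneg_left (by linarith [hC' k]) (Real.rpow_pos_of_pos two_pos _).le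
    calc (2:ℝ) ^ (θ * (k:ℝ)) * KK j x ((2:ℝ) ^ (-(k:ℝ)))
        = (2:ℝ) ^ ((θ - β) * (k:ℝ)) * trm j β x k := by rw [e1, trm]; ring
      _ ≤ (2:ℝ) ^ ((θ - β) * (k:ℝ)) * (C + 1) := h3
      _ = (C + 1) * r ^ k := by rw [e2]; ring
  have htermpos : ∀ k : ℕ, 0 ≤ (2:ℝ) ^ (θ * (k:ℝ)) * KK j x ((2:ℝ) ^ (-(k:ℝ))) :=
    fun k => mul_nonneg (Real.rpow_pos_of_pos two_pos _).le (KK_nonneg j x (tpos k).le)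
  have hC1 : (0:ℝ) ≤ C + 1 := by
    have := (trm_nonneg j β x 0).trans (hC' 0); linarith
  rcases eq_or_ne q ⊤ with rfl | hqne
  · refine Or.inl ⟨rfl, ⟨C + 1, ?_⟩⟩
    rintro _ ⟨k, rfl⟩
    have : r ^ k ≤ 1 := pow_le_one₀ hr0.le hr1.le
    calc (2:ℝ) ^ (θ * (k:ℝ)) * KK j x ((2:ℝ) ^ (-(k:ℝ)))
        ≤ (C + 1) * r ^ k := hbd k
      _ ≤ (C + 1) * 1 := mul_le_mul_of_nonneg_left this hC1
      _ = C + 1 := mul_one _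
  · refine Or.inr ⟨hqne, ?_⟩
    set qt : ℝ := q.toReal with hqt
    have hqtpos : 0 < qt := ENNReal.toReal_pos hq.ne' hqne
    set ρ : ℝ := r ^ qt with hρ
    have hρ0 : 0 ≤ ρ := Real.rpow_nonneg hr0.le _
    have hρ1 : ρ < 1 := Real.rpow_lt_one hr0.le hr1 hqtpos
    refine Summable.of_nonneg_of_le
      (fun k => Real.rpow_nonneg (htermpos k) _)
      (fun k => ?_)
      (((summable_geometric_of_lt_one hρ0 hρ1).mul_left ((C + 1) ^ qt)) : _)
    have h1 : ((2:ℝ) ^ (θ * (k:ℝ)) * KK j x ((2:ℝ) ^ (-(k:ℝ)))) ^ qt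
        ≤ ((C + 1) * r ^ k) ^ qt :=
      Real.rpow_le_rpow (htermpos k) (hbd k) hqtpos.le
    have h2 : ((C + 1) * r ^ k) ^ qt = (C + 1) ^ qt * ρ ^ k := by
      rw [Real.mul_rpow hC1 (pow_nonneg hr0.le _)]
      congr 1
      rw [← Real.rpow_natCast r k, ← Real.rpow_mul hr0.le, mul_comm,
        Real.rpow_mul hr0.le, Real.rpow_natCast]
    rw [h2] at h1
    exact h1

end


/-- If the range of the continuous injective embedding j : Y → X of Banach spaces is not
closed in X, then for every θ ∈ (0,1) and q ∈ (0,∞] the inclusion of Y into A_{θ,q} is strict: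
some x belongs to A_{θ,q} but not to the range of j. -/
theorem range_not_closed_implies_Y_strict_in_interpolation
    {X : Type*} [NormedAddCommGroup X] [NormedSpace ℝ X] [CompleteSpace X]
    {Y : Type*} [NormedAddCommGroup Y] [NormedSpace ℝ Y] [CompleteSpace Y]
    (j : Y →L[ℝ] X) (hinj : Function.Injective j)
    (K : X → ℝ → ℝ)
    (hK : ∀ (x : X) (t : ℝ), K x t = ⨅ y : Y, (‖x - j y‖ + t * ‖y‖))
    (hnc : ¬ IsClosed (Set.range (j : Y → X)))
    (θ : ℝ) (hθ : θ ∈ Set.Ioo (0 : ℝ) 1) :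
    ∀ q : ENNReal, 0 < q →
      ∃ x : X, MemA K θ q x ∧ x ∉ Set.range (j : Y → X) := by
  have hKeq : K = KK j := by
    funext x t
    rw [hK]
    rfl
  subst hKeq
  intro q hq
  by_contra hcon
  push_neg at hcon
  obtain ⟨hθ0, hθ1⟩ := hθ
  apply hnc
  refine isClosed_range_of_Asub_subset j hinj (β := (θ + 1) / 2)
    (by linarith) (by linarith) fun x hx => ?_
  exact hcon x (memA_of_mem_Asub j (by linarith) hx q hq)
end

section
/- Suppose that for some θ₀ ∈ (0,1) and some p₀ ∈ (0,∞] there exists x ∈ X that does not belong to A_{θ₀,p₀} (i.e. A_{θ₀,p₀} is strictly contained in X). Then there exists a constant c > 0 such that for every t > 0 there is x ∈ X with ‖x‖_X = 1 and K(x,t) > c. In particular, for every θ ∈ (0,1) and every p ∈ (0,∞] there exists x ∈ X that does not belong to A_{θ,p}. -/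
open Filter Topology

section Helpers
variable {X : Type*} [NormedAddCommGroup X] [NormedSpace ℝ X]
  {Y : Type*} [AddCommGroup Y] [Module ℝ Y]
  (NY : Seminorm ℝ Y) (j : Y →ₗ[ℝ] X)

lemma kf_bddBelow (x : X) {t : ℝ} (ht : 0 ≤ t) :
    BddBelow (Set.range fun y : Y => ‖x - j y‖ + t * NY y) := by
  refine ⟨0, ?_⟩
  rintro - ⟨y, rfl⟩
  exact add_nonneg (norm_nonneg _) (mul_nonneg ht (apply_nonneg _ _))

variable (K : X → ℝ → ℝ)
  (hK : ∀ (x : X) (t : ℝ), K x t = ⨅ y : Y, (‖x - j y‖ + t * NY y))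

include hK

lemma kf_nonneg (x : X) {t : ℝ} (ht : 0 ≤ t) : 0 ≤ K x t := by
  rw [hK]
  exact le_ciInf fun y => add_nonneg (norm_nonneg _) (mul_nonneg ht (apply_nonneg _ _))

lemma kf_le (x : X) {t : ℝ} (ht : 0 ≤ t) (y : Y) : K x t ≤ ‖x - j y‖ + t * NY y := by
  rw [hK]
  exact ciInf_le (kf_bddBelow NY j x ht) y

lemma kf_le_norm (x : X) {t : ℝ} (ht : 0 ≤ t) : K x t ≤ ‖x‖ := by
  have := kf_le NY j K hK x ht 0
  simpa using this

lemma kf_exists_lt (x : X) {t v : ℝ} (h : K x t < v) :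
    ∃ y : Y, ‖x - j y‖ + t * NY y < v := by
  rw [hK] at h
  exact exists_lt_of_ciInf_lt h

lemma kf_smul_le (x : X) {t : ℝ} (ht : 0 ≤ t) (c : ℝ) :
    K (c • x) t ≤ |c| * K x t := by
  rcases eq_or_ne c 0 with rfl | hc
  · simp only [zero_smul, abs_zero, zero_mul]
    have h := kf_le NY j K hK 0 ht 0
    simpa using h
  · have hc' : 0 < |c| := abs_pos.2 hc
    have h : ∀ y : Y, |c|⁻¹ * K (c • x) t ≤ ‖x - j y‖ + t * NY y := by
      intro y
      have h1 : K (c • x) t ≤ ‖c • x - j (c • y)‖ + t * NY (c • y) :=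
        kf_le NY j K hK _ ht _
      have h2 : ‖c • x - j (c • y)‖ = |c| * ‖x - j y‖ := by
        rw [map_smul, ← smul_sub, norm_smul, Real.norm_eq_abs]
      have h3 : NY (c • y) = |c| * NY y := by
        rw [map_smul_eq_mul, Real.norm_eq_abs]
      rw [h2, h3] at h1
      rw [inv_mul_le_iff₀ hc']
      calc K (c • x) t ≤ |c| * ‖x - j y‖ + t * (|c| * NY y) := h1
        _ = |c| * (‖x - j y‖ + t * NY y) := by ring
    have h4 : |c|⁻¹ * K (c • x) t ≤ K x t := by
      rw [hK x]; exact le_ciInf h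
    calc K (c • x) t = |c| * (|c|⁻¹ * K (c • x) t) := by field_simp
      _ ≤ |c| * K x t := by exact mul_le_mul_of_nonneg_left h4 hc'.le

lemma kf_add_le (u v : X) {t : ℝ} (ht : 0 ≤ t) :
    K (u + v) t ≤ K u t + K v t := by
  have h1 : ∀ y z : Y, K (u + v) t ≤ (‖u - j y‖ + t * NY y) + (‖v - j z‖ + t * NY z) := by
    intro y z
    have h := kf_le NY j K hK (u + v) ht (y + z)
    have h2 : ‖u + v - j (y + z)‖ ≤ ‖u - j y‖ + ‖v - j z‖ := by
      rw [map_add]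
      calc ‖u + v - (j y + j z)‖ = ‖(u - j y) + (v - j z)‖ := by congr 1; abel
        _ ≤ _ := norm_add_le _ _
    have h3 : NY (y + z) ≤ NY y + NY z := map_add_le_add NY y z
    nlinarith [apply_nonneg NY (y+z)]
  have h2 : ∀ z : Y, K (u + v) t - (‖v - j z‖ + t * NY z) ≤ K u t := by
    intro z
    rw [hK u]
    exact le_ciInf fun y => by linarith [h1 y z]
  have h3 : K (u + v) t - K u t ≤ K v t := by
    rw [hK v]
    exact le_ciInf fun z => by linarith [h2 z]
  linarith

lemma kf_neg (x : X) {t : ℝ} (ht : 0 ≤ t) : K (-x) t = K x t := by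
  have key : ∀ u : X, K (-u) t ≤ K u t := by
    intro u
    rw [hK u]
    refine le_ciInf fun y => ?_
    have h := kf_le NY j K hK (-u) ht (-y)
    have h2 : ‖-u - j (-y)‖ = ‖u - j y‖ := by
      rw [map_neg, ← norm_neg]; congr 1; abel
    have h3 : NY (-y) = NY y := map_neg_eq_map NY y
    rw [h2, h3] at h
    exact h
  refine le_antisymm (key x) ?_
  have h := key (-x)
  rwa [neg_neg] at h

lemma kf_lip (x z : X) {t : ℝ} (ht : 0 ≤ t) : K x t ≤ ‖x - z‖ + K z t := by
  have h : K x t - ‖x - z‖ ≤ K z t := by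
    rw [hK z]
    refine le_ciInf fun y => ?_
    have h1 := kf_le NY j K hK x ht y
    have h2 : ‖x - j y‖ ≤ ‖x - z‖ + ‖z - j y‖ := by
      calc ‖x - j y‖ = ‖(x - z) + (z - j y)‖ := by congr 1; abel
        _ ≤ _ := norm_add_le _ _
    linarith
  linarith

lemma kf_linear_decay (t₀ a : ℝ) (ht₀ : 0 < t₀) (ha0 : 0 ≤ a) (ha1 : a < 1)
    (H : ∀ x : X, K x t₀ ≤ a * ‖x‖) :
    ∃ C : ℝ, 0 < C ∧ ∀ (x : X) (t : ℝ), 0 < t → K x t ≤ C * t * ‖x‖ := by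
  set a' : ℝ := (a + 1) / 2 with ha'def
  have ha'0 : 0 < a' := by rw [ha'def]; linarith
  have ha'1 : a' < 1 := by rw [ha'def]; linarith
  have haa' : a < a' := by rw [ha'def]; linarith
  have hsel : ∀ r : X, ∃ y : Y, ‖r - j y‖ + t₀ * NY y ≤ a' * ‖r‖ := by
    intro r
    rcases eq_or_ne r 0 with rfl | hr
    · exact ⟨0, by simp⟩
    · have hrpos : 0 < ‖r‖ := norm_pos_iff.mpr hr
      have h1 : K r t₀ < a' * ‖r‖ :=
        lt_of_le_of_lt (H r) (mul_lt_mul_of_pos_right haa' hrpos)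
      obtain ⟨y, hy⟩ := kf_exists_lt NY j K hK r h1
      exact ⟨y, hy.le⟩
  choose sel hsel using hsel
  refine ⟨a' / (t₀ * (1 - a')), div_pos ha'0 (mul_pos ht₀ (by linarith)), ?_⟩
  intro x t ht
  let r : ℕ → X := fun n => Nat.rec x (fun _ rn => rn - j (sel rn)) n
  have hr0 : r 0 = x := rfl
  have hrs : ∀ n, r (n + 1) = r n - j (sel (r n)) := fun n => rfl
  have hnorm : ∀ n, ‖r n‖ ≤ a' ^ n * ‖x‖ := by
    intro n
    induction n with
    | zero => simp [hr0]
    | succ n ih =>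
      have h1 := hsel (r n)
      have h2 : ‖r (n + 1)‖ ≤ a' * ‖r n‖ := by
        rw [hrs]
        nlinarith [apply_nonneg NY (sel (r n))]
      calc ‖r (n + 1)‖ ≤ a' * ‖r n‖ := h2
        _ ≤ a' * (a' ^ n * ‖x‖) := mul_le_mul_of_nonneg_left ih ha'0.le
        _ = a' ^ (n + 1) * ‖x‖ := by ring
  have hNY : ∀ n, NY (sel (r n)) ≤ a' ^ (n + 1) * ‖x‖ / t₀ := by
    intro n
    have h1 := hsel (r n)
    have h2 := hnorm n
    rw [le_div_iff₀ ht₀]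
    calc NY (sel (r n)) * t₀ ≤ a' * ‖r n‖ := by
          linarith [norm_nonneg (r n - j (sel (r n)))]
      _ ≤ a' * (a' ^ n * ‖x‖) := mul_le_mul_of_nonneg_left h2 ha'0.le
      _ = a' ^ (n + 1) * ‖x‖ := by ring
  have hsum : ∀ n, NY (∑ i ∈ Finset.range n, sel (r i)) ≤ (a' / (t₀ * (1 - a'))) * ‖x‖ := by
    intro n
    have hstep1 : NY (∑ i ∈ Finset.range n, sel (r i)) ≤
        ∑ i ∈ Finset.range n, NY (sel (r i)) :=
      Finset.le_sum_of_subadditive NY (map_zero NY).le (map_add_le_add NY) _ _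
    have hstep2 : ∑ i ∈ Finset.range n, NY (sel (r i)) ≤
        ∑ i ∈ Finset.range n, a' ^ i * (a' * ‖x‖ / t₀) := by
      refine Finset.sum_le_sum fun i _ => ?_
      have := hNY i
      calc NY (sel (r i)) ≤ a' ^ (i + 1) * ‖x‖ / t₀ := this
        _ = a' ^ i * (a' * ‖x‖ / t₀) := by rw [pow_succ]; ring
    have hgeom : ∑ i ∈ Finset.range n, a' ^ i ≤ (1 - a')⁻¹ := by
      have h := Summable.sum_le_tsum (Finset.range n) (fun i _ => pow_nonneg ha'0.le i)
        (summable_geometric_of_lt_one ha'0.le ha'1)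
      rwa [tsum_geometric_of_lt_one ha'0.le ha'1] at h
    have hstep3 : ∑ i ∈ Finset.range n, a' ^ i * (a' * ‖x‖ / t₀) ≤
        (1 - a')⁻¹ * (a' * ‖x‖ / t₀) := by
      rw [← Finset.sum_mul]
      exact mul_le_mul_of_nonneg_right hgeom (by positivity)
    have heq : (1 - a')⁻¹ * (a' * ‖x‖ / t₀) = (a' / (t₀ * (1 - a'))) * ‖x‖ := by
      field_simp
    linarith
  have hres : ∀ n, x - j (∑ i ∈ Finset.range n, sel (r i)) = r n := by
    intro n
    induction n with
    | zero => simp [hr0]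
    | succ n ih =>
      rw [Finset.sum_range_succ, map_add, hrs, ← ih]
      abel
  have hbound : ∀ n, K x t ≤ a' ^ n * ‖x‖ + t * ((a' / (t₀ * (1 - a'))) * ‖x‖) := by
    intro n
    have h := kf_le NY j K hK x ht.le (∑ i ∈ Finset.range n, sel (r i))
    rw [hres] at h
    have h1 := hnorm n
    have h2 := hsum n
    nlinarith
  have hlim : Tendsto (fun n : ℕ => a' ^ n * ‖x‖ + t * ((a' / (t₀ * (1 - a'))) * ‖x‖)) atTop
      (𝓝 (0 * ‖x‖ + t * ((a' / (t₀ * (1 - a'))) * ‖x‖))) :=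
    ((tendsto_pow_atTop_nhds_zero_of_lt_one ha'0.le ha'1).mul_const _).add_const _
  have hfinal : K x t ≤ 0 * ‖x‖ + t * ((a' / (t₀ * (1 - a'))) * ‖x‖) :=
    ge_of_tendsto hlim (Filter.Eventually.of_forall hbound)
  calc K x t ≤ 0 * ‖x‖ + t * ((a' / (t₀ * (1 - a'))) * ‖x‖) := hfinal
    _ = (a' / (t₀ * (1 - a'))) * t * ‖x‖ := by ring

lemma kf_memA (C : ℝ) (hC : 0 ≤ C)
    (h : ∀ (x : X) (t : ℝ), 0 < t → K x t ≤ C * t * ‖x‖)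
    (θ : ℝ) (hθ : θ ∈ Set.Ioo (0 : ℝ) 1) (p : ENNReal) (hp : 0 < p) (x : X) :
    MemA K θ p x := by
  obtain ⟨hθ0, hθ1⟩ := hθ
  set b : ℝ := (2 : ℝ) ^ (θ - 1) with hbdef
  have hb0 : 0 < b := Real.rpow_pos_of_pos (by norm_num) _
  have hb1 : b < 1 := Real.rpow_lt_one_of_one_lt_of_neg (by norm_num) (by linarith)
  have hterm : ∀ k : ℕ, 0 ≤ (2 : ℝ) ^ (θ * (k : ℝ)) * K x ((2 : ℝ) ^ (-(k : ℝ))) ∧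
      (2 : ℝ) ^ (θ * (k : ℝ)) * K x ((2 : ℝ) ^ (-(k : ℝ))) ≤ (C * ‖x‖) * b ^ k := by
    intro k
    have htpos : (0 : ℝ) < (2 : ℝ) ^ (-(k : ℝ)) := Real.rpow_pos_of_pos (by norm_num) _
    have hKnn := kf_nonneg NY j K hK x htpos.le
    have hpow : (0 : ℝ) < (2 : ℝ) ^ (θ * (k : ℝ)) := Real.rpow_pos_of_pos (by norm_num) _
    refine ⟨mul_nonneg hpow.le hKnn, ?_⟩
    have h1 := h x _ htpos
    calc (2 : ℝ) ^ (θ * (k : ℝ)) * K x ((2 : ℝ) ^ (-(k : ℝ)))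
        ≤ (2 : ℝ) ^ (θ * (k : ℝ)) * (C * (2 : ℝ) ^ (-(k : ℝ)) * ‖x‖) :=
          mul_le_mul_of_nonneg_left h1 hpow.le
      _ = (C * ‖x‖) * ((2 : ℝ) ^ (θ * (k : ℝ)) * (2 : ℝ) ^ (-(k : ℝ))) := by ring
      _ = (C * ‖x‖) * b ^ k := by
          congr 1
          rw [← Real.rpow_add (by norm_num : (0 : ℝ) < 2), hbdef,
            ← Real.rpow_natCast ((2 : ℝ) ^ (θ - 1)) k,
            ← Real.rpow_mul (by norm_num : (0 : ℝ) ≤ 2)]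
          congr 1
          ring
  have hCx : 0 ≤ C * ‖x‖ := mul_nonneg hC (norm_nonneg x)
  rcases eq_or_ne p ⊤ with rfl | hne
  · refine Or.inl ⟨rfl, ⟨C * ‖x‖, ?_⟩⟩
    rintro - ⟨k, rfl⟩
    calc (2 : ℝ) ^ (θ * (k : ℝ)) * K x ((2 : ℝ) ^ (-(k : ℝ))) ≤ (C * ‖x‖) * b ^ k :=
        (hterm k).2
      _ ≤ (C * ‖x‖) * 1 := mul_le_mul_of_nonneg_left (pow_le_one₀ hb0.le hb1.le) hCx
      _ = C * ‖x‖ := mul_one _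
  · refine Or.inr ⟨hne, ?_⟩
    set pt := p.toReal with hptdef
    have hpt : 0 < pt := ENNReal.toReal_pos hp.ne' hne
    have hbk : ∀ k : ℕ, ((b ^ k : ℝ)) ^ pt = (b ^ pt) ^ k := by
      intro k
      rw [← Real.rpow_natCast b k, ← Real.rpow_natCast (b ^ pt) k,
        ← Real.rpow_mul hb0.le, ← Real.rpow_mul hb0.le]
      congr 1
      ring
    have hsum : Summable fun k : ℕ => (C * ‖x‖) ^ pt * (b ^ pt) ^ k :=
      (summable_geometric_of_lt_one (Real.rpow_nonneg hb0.le _)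
        (Real.rpow_lt_one hb0.le hb1 hpt)).mul_left _
    refine hsum.of_nonneg_of_le (fun k => Real.rpow_nonneg (hterm k).1 _) fun k => ?_
    calc ((2 : ℝ) ^ (θ * (k : ℝ)) * K x ((2 : ℝ) ^ (-(k : ℝ)))) ^ pt
        ≤ ((C * ‖x‖) * b ^ k) ^ pt :=
          Real.rpow_le_rpow (hterm k).1 (hterm k).2 hpt.le
      _ = (C * ‖x‖) ^ pt * (b ^ pt) ^ k := by
          rw [Real.mul_rpow hCx (pow_nonneg hb0.le k), hbk k]

lemma kf_cover (θ : ℝ) (p : ENNReal) (hp : 0 < p) (x : X) (h : MemA K θ p x) :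
    ∃ C : ℝ, ∀ k : ℕ, (2 : ℝ) ^ (θ * (k : ℝ)) * K x ((2 : ℝ) ^ (-(k : ℝ))) ≤ C := by
  rcases h with ⟨-, hbdd⟩ | ⟨hne, hsum⟩
  · obtain ⟨C, hC⟩ := hbdd
    exact ⟨C, fun k => hC (Set.mem_range_self k)⟩
  · set pt := p.toReal with hptdef
    have hpt : 0 < pt := ENNReal.toReal_pos hp.ne' hne
    set f : ℕ → ℝ := fun k => (2 : ℝ) ^ (θ * (k : ℝ)) * K x ((2 : ℝ) ^ (-(k : ℝ))) with hf
    have hfnn : ∀ k, 0 ≤ f k := fun k => mul_nonneg (Real.rpow_nonneg (by norm_num) _)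
      (kf_nonneg NY j K hK x (Real.rpow_pos_of_pos (by norm_num) _).le)
    refine ⟨(∑' k, f k ^ pt) ^ pt⁻¹, fun k => ?_⟩
    have h1 : f k ^ pt ≤ ∑' k, f k ^ pt :=
      Summable.le_tsum hsum k fun i _ => Real.rpow_nonneg (hfnn i) _
    have h2 : (f k ^ pt) ^ pt⁻¹ ≤ (∑' k, f k ^ pt) ^ pt⁻¹ :=
      Real.rpow_le_rpow (Real.rpow_nonneg (hfnn k) _) h1 (inv_nonneg.2 hpt.le)
    rwa [← Real.rpow_mul (hfnn k), mul_inv_cancel₀ hpt.ne', Real.rpow_one] at h2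

end Helpers

/-- If for some θ₀ ∈ (0,1) and p₀ ∈ (0,∞] the class A_{θ₀,p₀} is strictly contained in X, then
the K-functional decays slowly: K(S(X),t) > c for all t > 0 and some c > 0; in particular
every class A_{θ,p}, θ ∈ (0,1), p ∈ (0,∞], is strictly contained in X. -/
theorem one_strict_interpolation_implies_slow_decay
    {X : Type*} [NormedAddCommGroup X] [NormedSpace ℝ X] [CompleteSpace X]
    {Y : Type*} [AddCommGroup Y] [Module ℝ Y]
    (NY : Seminorm ℝ Y)
    (j : Y →ₗ[ℝ] X) (M : ℝ) (hM : 0 < M)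
    (hj : ∀ y : Y, ‖j y‖ ≤ M * NY y)
    (K : X → ℝ → ℝ)
    (hK : ∀ (x : X) (t : ℝ), K x t = ⨅ y : Y, (‖x - j y‖ + t * NY y))
    (θ₀ : ℝ) (hθ₀ : θ₀ ∈ Set.Ioo (0 : ℝ) 1) (p₀ : ENNReal) (hp₀ : 0 < p₀)
    (x₀ : X) (hx₀ : ¬ MemA K θ₀ p₀ x₀) :
    (∃ c : ℝ, 0 < c ∧ ∀ t : ℝ, 0 < t → ∃ x : X, ‖x‖ = 1 ∧ c < K x t) ∧
    (∀ θ : ℝ, θ ∈ Set.Ioo (0 : ℝ) 1 → ∀ p : ENNReal, 0 < p →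
      ∃ x : X, ¬ MemA K θ p x) := by
  have key : ∀ (t₀ a : ℝ), 0 < t₀ → 0 ≤ a → a < 1 → ¬ (∀ x : X, K x t₀ ≤ a * ‖x‖) := by
    intro t₀ a ht ha0 ha1 H
    obtain ⟨C, hCpos, hCK⟩ := kf_linear_decay NY j K hK t₀ a ht ha0 ha1 H
    exact hx₀ (kf_memA NY j K hK C hCpos.le hCK θ₀ hθ₀ p₀ hp₀ x₀)
  constructor
  · refine ⟨1/2, by norm_num, fun t ht => ?_⟩
    by_contra hcon
    push_neg at hcon
    refine key t (1/2) ht (by norm_num) (by norm_num) fun x => ?_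
    rcases eq_or_ne x 0 with rfl | hx
    · simpa using kf_le_norm NY j K hK 0 ht.le
    · have hxn : ‖x‖ ≠ 0 := norm_ne_zero_iff.2 hx
      have hu : ‖(‖x‖⁻¹ • x)‖ = 1 := by
        rw [norm_smul, norm_inv, norm_norm, inv_mul_cancel₀ hxn]
      have h1 := hcon _ hu
      have h2 : K x t ≤ |‖x‖| * K (‖x‖⁻¹ • x) t := by
        have h3 := kf_smul_le NY j K hK (‖x‖⁻¹ • x) ht.le ‖x‖
        rwa [smul_smul, mul_inv_cancel₀ hxn, one_smul] at h3
      rw [abs_of_nonneg (norm_nonneg x)] at h2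
      nlinarith [norm_nonneg x]
  · intro θ hθ p hp
    by_contra hcon
    push_neg at hcon
    obtain ⟨hθ0, hθ1⟩ := hθ
    set F : ℕ → Set X := fun n =>
      ⋂ k : ℕ, {x : X | (2 : ℝ) ^ (θ * (k : ℝ)) * K x ((2 : ℝ) ^ (-(k : ℝ))) ≤ n} with hF
    have hKcont : ∀ k : ℕ, Continuous fun x : X => K x ((2 : ℝ) ^ (-(k : ℝ))) := by
      intro k
      have htk : (0 : ℝ) ≤ (2 : ℝ) ^ (-(k : ℝ)) := (Real.rpow_pos_of_pos (by norm_num) _).le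
      have hlip : LipschitzWith 1 (fun x : X => K x ((2 : ℝ) ^ (-(k : ℝ)))) := by
        refine LipschitzWith.of_dist_le_mul fun x z => ?_
        rw [Real.dist_eq, NNReal.coe_one, one_mul, dist_eq_norm]
        rw [abs_sub_le_iff]
        constructor
        · linarith [kf_lip NY j K hK x z htk]
        · have := kf_lip NY j K hK z x htk
          rw [← norm_neg (z - x)] at this
          simp only [neg_sub] at this
          linarith
      exact hlip.continuous
    have hclosed : ∀ n, IsClosed (F n) := by
      intro n
      refine isClosed_iInter fun k => ?_
      exact isClosed_le (continuous_const.mul (hKcont k)) continuous_const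
    have hcover : (⋃ n, F n) = Set.univ := by
      ext x
      simp only [Set.mem_iUnion, Set.mem_univ, iff_true]
      obtain ⟨C, hC⟩ := kf_cover NY j K hK θ p hp x (hcon x)
      obtain ⟨n, hn⟩ := exists_nat_ge C
      exact ⟨n, Set.mem_iInter.2 fun k => le_trans (hC k) hn⟩
    obtain ⟨n, hn⟩ := nonempty_interior_of_iUnion_of_closed hclosed hcover
    obtain ⟨xb, hxb⟩ := hn
    obtain ⟨r, hr, hball⟩ := Metric.mem_nhds_iff.1 (mem_interior_iff_mem_nhds.1 hxb)
    have hxbar : xb ∈ F n := hball (Metric.mem_ball_self hr)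
    have hsmall : ∀ h' : X, ‖h'‖ < r → ∀ k : ℕ,
        (2 : ℝ) ^ (θ * (k : ℝ)) * K h' ((2 : ℝ) ^ (-(k : ℝ))) ≤ 2 * n := by
      intro h' hh' k
      have htk : (0 : ℝ) < (2 : ℝ) ^ (-(k : ℝ)) := Real.rpow_pos_of_pos (by norm_num) _
      have h1 : xb + h' ∈ F n := by
        refine hball ?_
        rw [Metric.mem_ball, dist_eq_norm]
        simpa using hh'
      have h2 := Set.mem_iInter.1 h1 k
      have h3 := Set.mem_iInter.1 hxbar k
      simp only [Set.mem_setOf_eq] at h2 h3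
      have h4 : K h' ((2 : ℝ) ^ (-(k : ℝ))) ≤
          K (xb + h') ((2 : ℝ) ^ (-(k : ℝ))) + K xb ((2 : ℝ) ^ (-(k : ℝ))) := by
        have h5 := kf_add_le NY j K hK (xb + h') (-xb) htk.le
        rw [kf_neg NY j K hK xb htk.le] at h5
        have h6 : xb + h' + -xb = h' := by abel
        rwa [h6] at h5
      have hpow : (0 : ℝ) < (2 : ℝ) ^ (θ * (k : ℝ)) := Real.rpow_pos_of_pos (by norm_num) _
      nlinarith [mul_le_mul_of_nonneg_left h4 hpow.le]
    have hgen : ∀ (k : ℕ) (x : X), K x ((2 : ℝ) ^ (-(k : ℝ))) ≤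
        ((4 * n / r) * ((2 : ℝ) ^ (θ * (k : ℝ)))⁻¹) * ‖x‖ := by
      intro k x
      have hpow : (0 : ℝ) < (2 : ℝ) ^ (θ * (k : ℝ)) := Real.rpow_pos_of_pos (by norm_num) _
      rcases eq_or_ne x 0 with rfl | hx
      · simpa using kf_le_norm NY j K hK 0 (Real.rpow_pos_of_pos (by norm_num : (0 : ℝ) < 2) (-(k : ℝ))).le
      · have hxn : 0 < ‖x‖ := norm_pos_iff.2 hx
        set u : X := ((r / 2) * ‖x‖⁻¹) • x with hu
        have hun : ‖u‖ = r / 2 := by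
          rw [hu, norm_smul, Real.norm_eq_abs, abs_of_pos (by positivity), mul_assoc,
            inv_mul_cancel₀ hxn.ne', mul_one]
        have hsm := hsmall u (by rw [hun]; linarith) k
        have hKu : K u ((2 : ℝ) ^ (-(k : ℝ))) ≤ 2 * n * ((2 : ℝ) ^ (θ * (k : ℝ)))⁻¹ := by
          rw [← le_div_iff₀' hpow, div_eq_mul_inv] at hsm
          exact hsm
        have hxu : x = ((2 / r) * ‖x‖) • u := by
          rw [hu, smul_smul]
          have : (2 / r) * ‖x‖ * ((r / 2) * ‖x‖⁻¹) = 1 := by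
            field_simp
          rw [this, one_smul]
        have h7 : K x ((2 : ℝ) ^ (-(k : ℝ))) ≤
            |(2 / r) * ‖x‖| * K u ((2 : ℝ) ^ (-(k : ℝ))) := by
          conv_lhs => rw [hxu]
          exact kf_smul_le NY j K hK u (Real.rpow_pos_of_pos (by norm_num) _).le _
        rw [abs_of_pos (by positivity)] at h7
        have hKu0 : 0 ≤ K u ((2 : ℝ) ^ (-(k : ℝ))) :=
          kf_nonneg NY j K hK u (Real.rpow_pos_of_pos (by norm_num) _).le
        calc K x ((2 : ℝ) ^ (-(k : ℝ))) ≤ (2 / r) * ‖x‖ * K u ((2 : ℝ) ^ (-(k : ℝ))) := h7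
          _ ≤ (2 / r) * ‖x‖ * (2 * n * ((2 : ℝ) ^ (θ * (k : ℝ)))⁻¹) := by
              refine mul_le_mul_of_nonneg_left hKu (by positivity)
          _ = ((4 * n / r) * ((2 : ℝ) ^ (θ * (k : ℝ)))⁻¹) * ‖x‖ := by
              field_simp
              ring
    -- choose k₀ with coefficient < 1
    have hconv : ∀ k : ℕ, ((2 : ℝ) ^ (θ * (k : ℝ)))⁻¹ = ((2 : ℝ) ^ (-θ)) ^ k := by
      intro k
      rw [← Real.rpow_natCast ((2 : ℝ) ^ (-θ)) k, ← Real.rpow_mul (by norm_num : (0 : ℝ) ≤ 2),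
        ← Real.rpow_neg (by norm_num : (0 : ℝ) ≤ 2)]
      congr 1
      ring
    have hc0 : (0 : ℝ) < (2 : ℝ) ^ (-θ) := Real.rpow_pos_of_pos (by norm_num) _
    have hc1 : (2 : ℝ) ^ (-θ) < 1 :=
      Real.rpow_lt_one_of_one_lt_of_neg (by norm_num) (by linarith)
    have htend : Tendsto (fun k : ℕ => (4 * (n : ℝ) / r) * ((2 : ℝ) ^ (-θ)) ^ k) atTop (𝓝 0) := by
      have := (tendsto_pow_atTop_nhds_zero_of_lt_one hc0.le hc1).const_mul (4 * (n : ℝ) / r)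
      simpa using this
    obtain ⟨k₀, hk₀⟩ := (htend.eventually (gt_mem_nhds (by norm_num : (0 : ℝ) < 1/2))).exists
    refine key ((2 : ℝ) ^ (-(k₀ : ℝ))) ((4 * n / r) * ((2 : ℝ) ^ (θ * (k₀ : ℝ)))⁻¹)
      (Real.rpow_pos_of_pos (by norm_num) _) ?_ ?_ (fun x => hgen k₀ x)
    · positivity
    · rw [hconv k₀]
      linarith [hk₀]
end

section
/- Assume that the range of j is dense in X. Let Z be a real normed space and let i : Z → X be a compact linear operator, i.e. the image under i of the closed unit ball of Z is relatively compact in X. Then for every ε > 0 there exists t₀ > 0 such that for all t with 0 < t ≤ t₀ and all z ∈ Z with ‖z‖_Z ≤ 1 one has K(i z, t) ≤ ε. Consequently, setting φ(t) = sup_{‖z‖_Z ≤ 1} K(i z, t), one has φ(t) → 0 as t → 0⁺ and K(i z, t) ≤ φ(t)·‖z‖_Z for every z ∈ Z and t > 0. -/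
open Filter Topology

/-- If Y is densely embedded in X and Z is compactly embedded in X via i, then the elements
of the unit ball of Z share a common decay of their K-functionals: K(i z, t) ≤ ε for all small
t uniformly in ‖z‖_Z ≤ 1; equivalently φ(t) = sup_{‖z‖_Z ≤ 1} K(i z, t) tends to 0 as t → 0⁺
and K(i z, t) ≤ φ(t)·‖z‖_Z for all z ∈ Z. -/
theorem compactly_embedded_common_decay
    {X : Type*} [NormedAddCommGroup X] [NormedSpace ℝ X] [CompleteSpace X]
    {Y : Type*} [AddCommGroup Y] [Module ℝ Y]
    (NY : Seminorm ℝ Y)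
    (j : Y →ₗ[ℝ] X) (M : ℝ) (hM : 0 < M)
    (hj : ∀ y : Y, ‖j y‖ ≤ M * NY y)
    (K : X → ℝ → ℝ)
    (hK : ∀ (x : X) (t : ℝ), K x t = ⨅ y : Y, (‖x - j y‖ + t * NY y))
    (hdense : DenseRange (j : Y → X))
    {Z : Type*} [NormedAddCommGroup Z] [NormedSpace ℝ Z]
    (i : Z →L[ℝ] X)
    (hcompact : IsCompact (closure ((i : Z → X) '' Metric.closedBall 0 1))) :
    (∀ ε : ℝ, 0 < ε → ∃ t₀ : ℝ, 0 < t₀ ∧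
      ∀ t : ℝ, 0 < t → t ≤ t₀ → ∀ z : Z, ‖z‖ ≤ 1 → K (i z) t ≤ ε) ∧
    (∀ φ : ℝ → ℝ, (∀ t : ℝ, φ t = ⨆ z : {z : Z // ‖z‖ ≤ 1}, K (i z) t) →
      Tendsto φ (𝓝[>] (0 : ℝ)) (𝓝 0) ∧
      ∀ (z : Z) (t : ℝ), 0 < t → K (i z) t ≤ φ t * ‖z‖) := by
  have hNY : ∀ y : Y, 0 ≤ NY y := fun y => apply_nonneg NY y
  have hbdd : ∀ (x : X) (t : ℝ), 0 ≤ t →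
      BddBelow (Set.range fun y : Y => ‖x - j y‖ + t * NY y) := by
    intro x t ht
    refine ⟨0, ?_⟩
    rintro _ ⟨y, rfl⟩
    exact add_nonneg (norm_nonneg _) (mul_nonneg ht (hNY y))
  have hKy : ∀ (x : X) (t : ℝ), 0 ≤ t → ∀ y : Y, K x t ≤ ‖x - j y‖ + t * NY y := by
    intro x t ht y
    rw [hK]
    exact ciInf_le (hbdd x t ht) y
  have hK0 : ∀ (x : X) (t : ℝ), 0 ≤ t → K x t ≤ ‖x‖ := by
    intro x t ht
    have := hKy x t ht 0
    simpa using this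
  have hKnn : ∀ (x : X) (t : ℝ), 0 ≤ t → 0 ≤ K x t := by
    intro x t ht
    rw [hK]
    exact le_ciInf fun y => add_nonneg (norm_nonneg _) (mul_nonneg ht (hNY y))
  -- Part 1
  have part1 : ∀ ε : ℝ, 0 < ε → ∃ t₀ : ℝ, 0 < t₀ ∧
      ∀ t : ℝ, 0 < t → t ≤ t₀ → ∀ z : Z, ‖z‖ ≤ 1 → K (i z) t ≤ ε := by
    intro ε hε
    set S := closure ((i : Z → X) '' Metric.closedBall 0 1) with hS
    have hy : ∀ x : X, ∃ y : Y, ‖x - j y‖ < ε / 3 := by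
      intro x
      obtain ⟨y, hy⟩ := hdense.exists_dist_lt x (by positivity : (0:ℝ) < ε / 3)
      exact ⟨y, by rwa [dist_eq_norm] at hy⟩
    choose y hy using hy
    have hcover : S ⊆ ⋃ x : X, Metric.ball (j (y x)) (2 * ε / 3) := by
      intro x hx
      refine Set.mem_iUnion.mpr ⟨x, ?_⟩
      rw [Metric.mem_ball, dist_eq_norm]
      calc ‖x - j (y x)‖ < ε / 3 := hy x
        _ < 2 * ε / 3 := by linarith
    obtain ⟨T, hT⟩ := hcompact.elim_finite_subcover
      (fun x : X => Metric.ball (j (y x)) (2 * ε / 3)) (fun x => Metric.isOpen_ball) hcover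
    obtain ⟨C, hC⟩ := Finset.exists_le (T.image fun x => NY (y x))
    set C' : ℝ := max C 0 with hC'
    have hC'nn : 0 ≤ C' := le_max_right _ _
    set t₀ : ℝ := ε / (3 * (C' + 1)) with ht₀def
    have ht₀pos : 0 < t₀ := by
      apply div_pos hε
      positivity
    refine ⟨t₀, ht₀pos, ?_⟩
    intro t ht htle z hz
    have hmem : i z ∈ S := subset_closure ⟨z, by simpa [Metric.mem_closedBall, dist_eq_norm], rfl⟩
    obtain ⟨x, hxT, hxball⟩ := Set.mem_iUnion₂.mp (hT hmem)
    have hnorm : ‖i z - j (y x)‖ < 2 * ε / 3 := by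
      rw [Metric.mem_ball, dist_eq_norm] at hxball
      exact hxball
    have hNYle : NY (y x) ≤ C' :=
      le_trans (hC _ (Finset.mem_image.mpr ⟨x, hxT, rfl⟩)) (le_max_left _ _)
    have ht1 : t * NY (y x) ≤ t₀ * C' :=
      mul_le_mul htle hNYle (hNY _) ht₀pos.le
    have ht2 : t₀ * C' ≤ ε / 3 := by
      have h3 : t₀ * (C' + 1) = ε / 3 := by
        rw [ht₀def]
        field_simp
      nlinarith [ht₀pos.le]
    calc K (i z) t ≤ ‖i z - j (y x)‖ + t * NY (y x) := hKy _ _ ht.le _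
      _ ≤ 2 * ε / 3 + ε / 3 := by linarith
      _ = ε := by ring
  refine ⟨part1, ?_⟩
  intro φ hφ
  have hne : Nonempty {z : Z // ‖z‖ ≤ 1} := ⟨⟨0, by simp⟩⟩
  have hbddS : ∀ t : ℝ, 0 ≤ t →
      BddAbove (Set.range fun z : {z : Z // ‖z‖ ≤ 1} => K (i z) t) := by
    intro t ht
    refine ⟨‖i‖, ?_⟩
    rintro _ ⟨z, rfl⟩
    calc K (i z) t ≤ ‖i (z : Z)‖ := hK0 _ _ ht
      _ ≤ ‖i‖ * ‖(z : Z)‖ := i.le_opNorm _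
      _ ≤ ‖i‖ * 1 := by
          apply mul_le_mul_of_nonneg_left z.2 (norm_nonneg i)
      _ = ‖i‖ := mul_one _
  have hφnn : ∀ t : ℝ, 0 < t → 0 ≤ φ t := by
    intro t ht
    rw [hφ]
    exact le_ciSup_of_le (hbddS t ht.le) ⟨0, by simp⟩ (hKnn _ _ ht.le)
  have hφle : ∀ z : Z, ‖z‖ ≤ 1 → ∀ t : ℝ, 0 < t → K (i z) t ≤ φ t := by
    intro z hz t ht
    rw [hφ]
    exact le_ciSup (hbddS t ht.le) ⟨z, hz⟩
  constructor
  · rw [Metric.tendsto_nhdsWithin_nhds]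
    intro ε hε
    obtain ⟨t₀, ht₀, hbound⟩ := part1 (ε / 2) (by positivity)
    refine ⟨t₀, ht₀, fun t htmem hdist => ?_⟩
    have ht : 0 < t := htmem
    have htle : t ≤ t₀ := by
      rw [Real.dist_eq, sub_zero, abs_of_pos ht] at hdist
      exact hdist.le
    have h1 : φ t ≤ ε / 2 := by
      rw [hφ]
      exact ciSup_le fun z => hbound t ht htle z z.2
    rw [Real.dist_eq, sub_zero, abs_of_nonneg (hφnn t ht)]
    linarith
  · intro z t ht
    rcases eq_or_ne z 0 with rfl | hz
    · simp only [map_zero, norm_zero, mul_zero]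
      simpa using hK0 0 t ht.le
    · set c : ℝ := ‖z‖ with hcdef
      have hc : 0 < c := norm_pos_iff.mpr hz
      set z' : Z := c⁻¹ • z with hz'def
      have hz1 : ‖z'‖ ≤ 1 := by
        rw [hz'def, norm_smul, norm_inv, Real.norm_eq_abs, abs_of_pos hc, ← hcdef,
          inv_mul_cancel₀ hc.ne']
      have hiz : i z = c • i z' := by
        rw [hz'def, map_smul, smul_smul, mul_inv_cancel₀ hc.ne', one_smul]
      have hhom : K (i z) t ≤ c * K (i z') t := by
        have hdiv : K (i z) t / c ≤ K (i z') t := by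
          rw [hK (i z') t]
          refine le_ciInf fun y => ?_
          rw [div_le_iff₀ hc]
          calc K (i z) t ≤ ‖i z - j (c • y)‖ + t * NY (c • y) := hKy _ _ ht.le _
            _ = (‖i z' - j y‖ + t * NY y) * c := by
                rw [hiz, j.map_smul, ← smul_sub, norm_smul, map_smul_eq_mul,
                  Real.norm_eq_abs, abs_of_pos hc]
                ring
        calc K (i z) t = c * (K (i z) t / c) := by field_simp
          _ ≤ c * K (i z') t := mul_le_mul_of_nonneg_left hdiv hc.le
      calc K (i z) t ≤ c * K (i z') t := hhom
        _ ≤ c * φ t := mul_le_mul_of_nonneg_left (hφle z' hz1 t ht) hc.le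
        _ = φ t * ‖z‖ := by rw [mul_comm]
end
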